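/- arXiv:2406.17387 — 15 statements merged into one kernel-verified Lean document; each statement's English description precedes it below -/
import Mathlib

section
/- Let G ⊊ ℝⁿ be a domain, let x ∈ G, let u ∈ ∂G be a boundary point with |x−u| = dist(x, ∂G), and for 0 < k < 1 set y = u + k(x−u) (so y ∈ G). Then c̃_G(x,y) = (1+k)·s_G(x,y). In particular, the constants 1 and 2 in the inequality s_G ≤ c̃_G ≤ 2·s_G are best possible for every domain G and every x ∈ G, since the ratio c̃_G(x,y)/s_G(x,y) = 1+k tends to 1 as k → 0⁺ and to 2 as k → 1⁻. -/
open Metric Set Filter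

/-- The new hyperbolic type metric of Song and Wang:
`c̃_G(x,y) = |x−y| / inf_{z∈∂G} max{|x−z|, |y−z|}`. -/
noncomputable def ctilde {n : ℕ} (G : Set (EuclideanSpace ℝ (Fin n)))
    (x y : EuclideanSpace ℝ (Fin n)) : ℝ :=
  dist x y / sInf ((fun z => max (dist x z) (dist y z)) '' frontier G)

/-- The triangular ratio metric:
`s_G(x,y) = |x−y| / inf_{z∈∂G} (|x−z| + |z−y|)`. -/
noncomputable def sMetric {n : ℕ} (G : Set (EuclideanSpace ℝ (Fin n)))
    (x y : EuclideanSpace ℝ (Fin n)) : ℝ :=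
  dist x y / sInf ((fun z => dist x z + dist z y) '' frontier G)

/-- If `x ∈ G`, `u ∈ ∂G` with `|x−u| = dist(x,∂G)`, `0 < k < 1` and `y = u + k(x−u)`,
then `c̃_G(x,y) = (1+k)·s_G(x,y)`; since `1+k → 1` as `k → 0⁺` and `1+k → 2` as `k → 1⁻`,
the constants `1` and `2` in `s_G ≤ c̃_G ≤ 2 s_G` are best possible. -/
theorem stmt_1 {n : ℕ} (hn : 1 ≤ n) (G : Set (EuclideanSpace ℝ (Fin n)))
    (hGopen : IsOpen G) (hGconn : IsConnected G) (hGproper : G ≠ univ)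
    (x : EuclideanSpace ℝ (Fin n)) (hx : x ∈ G)
    (u : EuclideanSpace ℝ (Fin n)) (hu : u ∈ frontier G)
    (hdist : dist x u = infDist x (frontier G))
    (k : ℝ) (hk : k ∈ Ioo (0 : ℝ) 1)
    (y : EuclideanSpace ℝ (Fin n)) (hy : y = u + k • (x - u)) :
    ctilde G x y = (1 + k) * sMetric G x y ∧
      Tendsto (fun t : ℝ => 1 + t) (nhdsWithin 0 (Ioi 0)) (nhds 1) ∧
      Tendsto (fun t : ℝ => 1 + t) (nhdsWithin 1 (Iio 1)) (nhds 2) := by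
  obtain ⟨hk0, hk1⟩ := hk
  have hxu : x ≠ u := by
    rintro rfl
    exact hu.2 (by simpa [hGopen.interior_eq] using hx)
  set d := dist x u with hd
  have hdpos : 0 < d := dist_pos.mpr hxu
  have hxy : dist x y = (1 - k) * d := by
    rw [hy, dist_eq_norm]
    have : x - (u + k • (x - u)) = (1 - k) • (x - u) := by module
    rw [this, norm_smul, Real.norm_eq_abs, abs_of_pos (by linarith), hd, dist_eq_norm]
  have hyu : dist y u = k * d := by
    rw [hy, dist_eq_norm]
    have : u + k • (x - u) - u = k • (x - u) := by module
    rw [this, norm_smul, Real.norm_eq_abs, abs_of_pos hk0, hd, dist_eq_norm]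
  have hlow : ∀ z ∈ frontier G, d ≤ dist x z := fun z hz =>
    hdist.trans_le (infDist_le_dist_of_mem hz)
  -- sInf of max = d
  have hA : sInf ((fun z => max (dist x z) (dist y z)) '' frontier G) = d := by
    apply le_antisymm
    · apply csInf_le ⟨0, by rintro a ⟨z, hz, rfl⟩; positivity⟩
      refine ⟨u, hu, ?_⟩
      simp only [hyu, ← hd]
      rw [max_eq_left]; nlinarith
    · apply le_csInf ((Set.nonempty_of_mem hu).image _)
      rintro a ⟨z, hz, rfl⟩
      exact le_trans (hlow z hz) (le_max_left _ _)
  -- sInf of sum = (1+k)*d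
  have hB : sInf ((fun z => dist x z + dist z y) '' frontier G) = (1 + k) * d := by
    apply le_antisymm
    · apply csInf_le ⟨0, by rintro a ⟨z, hz, rfl⟩; positivity⟩
      refine ⟨u, hu, ?_⟩
      simp only [dist_comm u y, hyu, ← hd]; ring
    · apply le_csInf ((Set.nonempty_of_mem hu).image _)
      rintro a ⟨z, hz, rfl⟩
      show (1 + k) * d ≤ dist x z + dist z y
      have h1 : dist x z ≤ dist x y + dist y z := dist_triangle _ _ _
      have h2 : d ≤ dist x z := hlow z hz
      rw [dist_comm z y]
      linarith
  refine ⟨?_, ?_, ?_⟩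
  · rw [ctilde, sMetric, hA, hB, hxy]
    field_simp
  · have h : Tendsto (fun t : ℝ => 1 + t) (nhds 0) (nhds 1) := by
      simpa using (continuous_add_left (1:ℝ)).tendsto 0
    exact h.mono_left nhdsWithin_le_nhds
  · have h : Tendsto (fun t : ℝ => 1 + t) (nhds 1) (nhds 2) := by
      simpa [one_add_one_eq_two] using (continuous_add_left (1:ℝ)).tendsto 1
    exact h.mono_left nhdsWithin_le_nhds
end

section
/- For every domain G ⊊ ℝⁿ and all points x, y ∈ G, the inequalities j*_G(x,y) ≤ c̃_G(x,y) ≤ 4·j*_G(x,y) hold. -/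
open Metric Set

/-- The `j*` metric:
`j*_G(x,y) = |x−y| / (|x−y| + 2·min{dist(x,∂G), dist(y,∂G)})`. -/
noncomputable def jStar {n : ℕ} (G : Set (EuclideanSpace ℝ (Fin n)))
    (x y : EuclideanSpace ℝ (Fin n)) : ℝ :=
  dist x y / (dist x y + 2 * min (infDist x (frontier G)) (infDist y (frontier G)))

/-- For every domain `G ⊊ ℝⁿ` and all `x, y ∈ G`:
`j*_G(x,y) ≤ c̃_G(x,y) ≤ 4·j*_G(x,y)`. -/
theorem stmt_3 {n : ℕ} (hn : 1 ≤ n) (G : Set (EuclideanSpace ℝ (Fin n)))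
    (hGopen : IsOpen G) (hGconn : IsConnected G) (hGproper : G ≠ univ)
    (x y : EuclideanSpace ℝ (Fin n)) (hx : x ∈ G) (hy : y ∈ G) :
    jStar G x y ≤ ctilde G x y ∧ ctilde G x y ≤ 4 * jStar G x y := by
  have hFne : (frontier G).Nonempty := nonempty_frontier_iff.mpr ⟨⟨x, hx⟩, hGproper⟩
  have hFc : IsClosed (frontier G) := isClosed_frontier
  have hxF : x ∉ frontier G := fun h => (hGopen.frontier_eq ▸ h).2 hx
  have hyF : y ∉ frontier G := fun h => (hGopen.frontier_eq ▸ h).2 hy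
  have hr : 0 < infDist x (frontier G) := (hFc.notMem_iff_infDist_pos hFne).1 hxF
  have hs : 0 < infDist y (frontier G) := (hFc.notMem_iff_infDist_pos hFne).1 hyF
  set r := infDist x (frontier G) with hrdef
  set s := infDist y (frontier G) with hsdef
  set d := dist x y with hddef
  set m := min r s with hmdef
  have hm0 : 0 < m := lt_min hr hs
  have hd0 : 0 ≤ d := dist_nonneg
  set S := sInf ((fun z => max (dist x z) (dist y z)) '' frontier G) with hSdef
  have hbdd : BddBelow ((fun z => max (dist x z) (dist y z)) '' frontier G) := by
    refine ⟨0, ?_⟩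
    rintro v ⟨z, _, rfl⟩
    exact le_max_of_le_left dist_nonneg
  -- lower bound: (d + 2m)/4 ≤ S
  have hlow : (d + 2 * m) / 4 ≤ S := by
    apply le_csInf (hFne.image _)
    rintro v ⟨z, hz, rfl⟩
    have hxz : r ≤ dist x z := infDist_le_dist_of_mem hz
    have hyz : s ≤ dist y z := infDist_le_dist_of_mem hz
    have htri : d ≤ dist x z + dist y z := by
      have := dist_triangle x z y
      rw [dist_comm z y] at this
      linarith
    have h1 := le_max_left (dist x z) (dist y z)
    have h2 := le_max_right (dist x z) (dist y z)
    have hmr := min_le_left r s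
    have hms := min_le_right r s
    linarith
  -- upper bound: S ≤ m + d
  have hupx : S - d ≤ r := by
    rw [hrdef]
    by_contra hcon
    push_neg at hcon
    obtain ⟨z, hz, hzlt⟩ := (infDist_lt_iff hFne).1 hcon
    have h1 : S ≤ max (dist x z) (dist y z) :=
      csInf_le hbdd ⟨z, hz, rfl⟩
    have h2 : dist y z ≤ d + dist x z := by
      have := dist_triangle y x z
      rw [dist_comm y x] at this
      linarith
    have := max_le (le_add_of_nonneg_left hd0 : dist x z ≤ d + dist x z) h2
    linarith
  have hupy : S - d ≤ s := by
    rw [hsdef]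
    by_contra hcon
    push_neg at hcon
    obtain ⟨z, hz, hzlt⟩ := (infDist_lt_iff hFne).1 hcon
    have h1 : S ≤ max (dist x z) (dist y z) :=
      csInf_le hbdd ⟨z, hz, rfl⟩
    have h2 : dist x z ≤ d + dist y z := by
      have := dist_triangle x y z
      linarith
    have := max_le h2 (le_add_of_nonneg_left hd0 : dist y z ≤ d + dist y z)
    linarith
  have hup : S ≤ m + d := by
    rcases le_total r s with h | h
    · simp only [hmdef, min_eq_left h]; linarith
    · simp only [hmdef, min_eq_right h]; linarith
  have hS0 : 0 < S := lt_of_lt_of_le (by linarith) hlow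
  have hden0 : 0 < d + 2 * m := by linarith
  constructor
  · show d / (d + 2 * m) ≤ d / S
    apply div_le_div_of_nonneg_left hd0 hS0
    linarith
  · show d / S ≤ 4 * (d / (d + 2 * m))
    rw [mul_div_assoc']
    rw [div_le_div_iff₀ hS0 hden0]
    nlinarith
end

section
/- For every convex domain G ⊊ ℝⁿ and all points x, y ∈ G, the inequality c̃_G(x,y) ≤ 2√2·j*_G(x,y) holds. -/
open Metric Set

/-!
Let `z ∈ ∂G` and let `⟪e, ·⟫ = ⟪e, z⟫` be a supporting hyperplane of `G` at `z`, with `‖e‖ = 1`.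
The heights `α, β` of `x, y` below this hyperplane bound their distances to `∂G`, so
`δ = min (d(x,∂G)) (d(y,∂G))` satisfies `δ² ≤ αβ`. Reflecting `y` in the hyperplane gives a point
`y'` with `|x - y'|² = |x - y|² + 4αβ` and `|z - y'| = |z - y|`, so by the triangle inequality
`|x - y|² + (2δ)² ≤ (|x - z| + |y - z|)² ≤ 4 M²`, where `M = max |x - z| |y - z|`.
Finally `(|x - y| + 2δ)² ≤ 2 (|x - y|² + (2δ)²) ≤ 8 M²`, and taking the infimum over `z` gives
`|x - y| / inf_z M ≤ 2√2 |x - y| / (|x - y| + 2δ)`.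
-/

lemma add_le_two_mul_sqrt_two_mul_of_sq_add_sq_le {a b m : ℝ} (hm : 0 ≤ m)
    (h : a ^ 2 + b ^ 2 ≤ (2 * m) ^ 2) : a + b ≤ 2 * √2 * m := by
  have hsqrt : √2 ^ 2 = 2 := Real.sq_sqrt zero_le_two
  apply le_of_sq_le_sq _ (by positivity)
  calc (a + b) ^ 2 ≤ 2 * (a ^ 2 + b ^ 2) := by nlinarith [sq_nonneg (a - b)]
    _ ≤ 2 * (2 * m) ^ 2 := by gcongr
    _ = (2 * √2 * m) ^ 2 := by rw [mul_pow, mul_pow, mul_pow, hsqrt]; ring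

section InnerProductSpace

variable {E : Type*} [NormedAddCommGroup E] [InnerProductSpace ℝ E]

open scoped RealInnerProductSpace

/-- `y + (2 * (c - ⟪e, y⟫)) • e` is the reflection of `y` in the hyperplane `⟪e, ·⟫ = c`. -/
lemma norm_sub_reflect_sq {e : E} (he : ‖e‖ = 1) (c : ℝ) (x y : E) :
    ‖x - (y + (2 * (c - ⟪e, y⟫)) • e)‖ ^ 2 = ‖x - y‖ ^ 2 + 4 * (c - ⟪e, x⟫) * (c - ⟪e, y⟫) := by
  rw [← sub_sub, norm_sub_sq_real, real_inner_smul_right, real_inner_comm e (x - y),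
    inner_sub_right, norm_smul, he, Real.norm_eq_abs, mul_one, sq_abs]
  ring

lemma norm_sub_sq_add_four_mul_heights_le {e : E} (he : ‖e‖ = 1) (x y z : E) :
    ‖x - y‖ ^ 2 + 4 * (⟪e, z⟫ - ⟪e, x⟫) * (⟪e, z⟫ - ⟪e, y⟫) ≤ (‖x - z‖ + ‖y - z‖) ^ 2 := by
  set y' := y + (2 * (⟪e, z⟫ - ⟪e, y⟫)) • e
  have hzy' : ‖z - y'‖ = ‖z - y‖ := by
    have h := norm_sub_reflect_sq he ⟪e, z⟫ z y
    rw [sub_self, mul_zero, zero_mul, add_zero] at h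
    exact (pow_left_inj₀ (norm_nonneg _) (norm_nonneg _) two_ne_zero).1 h
  rw [← norm_sub_reflect_sq he, ← norm_sub_rev z y, ← hzy']
  gcongr
  exact norm_sub_le_norm_sub_add_norm_sub x z y'

lemma exists_norm_eq_one_inner_lt_of_notMem [CompleteSpace E] {s : Set E} (hconv : Convex ℝ s)
    (hopen : IsOpen s) (hne : s.Nonempty) {z : E} (hz : z ∉ s) :
    ∃ e : E, ‖e‖ = 1 ∧ ∀ a ∈ s, ⟪e, a⟫ < ⟪e, z⟫ := by
  obtain ⟨f, hf⟩ := geometric_hahn_banach_open_point hconv hopen hz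
  set u := (InnerProductSpace.toDual ℝ E).symm f
  have hu : ∀ w, ⟪u, w⟫ = f w := fun w => InnerProductSpace.toDual_symm_apply
  obtain ⟨x, hx⟩ := hne
  have hu0 : u ≠ 0 := by
    rintro h
    simpa [← hu, h] using hf x hx
  refine ⟨‖u‖⁻¹ • u, norm_smul_inv_norm hu0, fun a ha => ?_⟩
  simp only [real_inner_smul_left, hu]
  exact mul_lt_mul_of_pos_left (hf a ha) (inv_pos.2 (norm_pos_iff.2 hu0))

lemma infDist_frontier_le_dist [FiniteDimensional ℝ E] {s : Set E} {x p : E} (hx : x ∈ s)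
    (hp : p ∉ s) : infDist x (frontier s) ≤ dist x p := by
  obtain ⟨q, hq, hxq⟩ :=
    exists_mem_frontier_infDist_compl_eq_dist hx ((ne_univ_iff_exists_notMem s).2 ⟨p, hp⟩)
  exact (infDist_le_dist_of_mem hq).trans (hxq ▸ infDist_le_dist_of_mem hp)

lemma infDist_frontier_le_of_inner_lt [FiniteDimensional ℝ E] {s : Set E} {e : E} (he : ‖e‖ = 1)
    {c : ℝ} (hs : ∀ a ∈ s, ⟪e, a⟫ < c) {x : E} (hx : x ∈ s) :
    infDist x (frontier s) ≤ c - ⟪e, x⟫ := by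
  have hpos : 0 < c - ⟪e, x⟫ := sub_pos.2 (hs x hx)
  set p := x + (c - ⟪e, x⟫) • e
  have hp : p ∉ s := by
    intro hp
    have h := hs p hp
    rw [inner_add_right, real_inner_smul_right, real_inner_self_eq_norm_sq, he] at h
    linarith
  calc infDist x (frontier s) ≤ dist x p := infDist_frontier_le_dist hx hp
    _ = c - ⟪e, x⟫ := by
      rw [dist_eq_norm, sub_add_cancel_left, norm_neg, norm_smul, he, mul_one,
        Real.norm_of_nonneg hpos.le]

lemma dist_add_two_mul_min_infDist_frontier_le [FiniteDimensional ℝ E] {G : Set E}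
    (hGopen : IsOpen G) (hGconv : Convex ℝ G) {x y z : E} (hx : x ∈ G) (hy : y ∈ G)
    (hz : z ∈ frontier G) :
    dist x y + 2 * min (infDist x (frontier G)) (infDist y (frontier G)) ≤
      2 * √2 * max (dist x z) (dist y z) := by
  have hzG : z ∉ G := (hGopen.frontier_eq ▸ hz).2
  obtain ⟨e, he, hsep⟩ := exists_norm_eq_one_inner_lt_of_notMem hGconv hGopen ⟨x, hx⟩ hzG
  set δ := min (infDist x (frontier G)) (infDist y (frontier G))
  have hδ0 : 0 ≤ δ := le_min infDist_nonneg infDist_nonneg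
  have hδx : δ ≤ ⟪e, z⟫ - ⟪e, x⟫ :=
    (min_le_left _ _).trans (infDist_frontier_le_of_inner_lt he hsep hx)
  have hδy : δ ≤ ⟪e, z⟫ - ⟪e, y⟫ :=
    (min_le_right _ _).trans (infDist_frontier_le_of_inner_lt he hsep hy)
  apply add_le_two_mul_sqrt_two_mul_of_sq_add_sq_le ((dist_nonneg).trans (le_max_left _ _))
  rw [dist_eq_norm, dist_eq_norm, dist_eq_norm]
  calc ‖x - y‖ ^ 2 + (2 * δ) ^ 2
      ≤ ‖x - y‖ ^ 2 + 4 * (⟪e, z⟫ - ⟪e, x⟫) * (⟪e, z⟫ - ⟪e, y⟫) := by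
        nlinarith [mul_le_mul hδx hδy hδ0 (hδ0.trans hδx)]
    _ ≤ (‖x - z‖ + ‖y - z‖) ^ 2 := norm_sub_sq_add_four_mul_heights_le he x y z
    _ ≤ (2 * max ‖x - z‖ ‖y - z‖) ^ 2 := by
        gcongr
        linarith [le_max_left ‖x - z‖ ‖y - z‖, le_max_right ‖x - z‖ ‖y - z‖]

end InnerProductSpace

theorem stmt_4_general {n : ℕ} (G : Set (EuclideanSpace ℝ (Fin n)))
    (hGopen : IsOpen G) (hGproper : G ≠ univ)
    (hGconv : Convex ℝ G)
    (x y : EuclideanSpace ℝ (Fin n)) (hx : x ∈ G) (hy : y ∈ G) :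
    ctilde G x y ≤ 2 * Real.sqrt 2 * jStar G x y := by
  set δ := min (infDist x (frontier G)) (infDist y (frontier G))
  rcases (dist_nonneg : 0 ≤ dist x y).eq_or_lt with hxy | hxy
  · simp [ctilde, jStar, ← hxy]
  have hδ0 : 0 ≤ δ := le_min infDist_nonneg infDist_nonneg
  have hfr : (frontier G).Nonempty := nonempty_frontier_iff.2 ⟨⟨x, hx⟩, hGproper⟩
  have hbound : (dist x y + 2 * δ) / (2 * √2) ≤
      sInf ((fun z => max (dist x z) (dist y z)) '' frontier G) := by
    refine le_csInf (hfr.image _) ?_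
    rintro _ ⟨z, hz, rfl⟩
    rw [div_le_iff₀ (by positivity)]
    exact (dist_add_two_mul_min_infDist_frontier_le hGopen hGconv hx hy hz).trans_eq (mul_comm _ _)
  calc ctilde G x y ≤ dist x y / ((dist x y + 2 * δ) / (2 * √2)) :=
        div_le_div_of_nonneg_left hxy.le (by positivity) hbound
    _ = 2 * √2 * jStar G x y := by
      change _ = 2 * √2 * (dist x y / (dist x y + 2 * δ))
      field_simp

/-- For every convex domain `G ⊊ ℝⁿ` and all `x, y ∈ G`:
`c̃_G(x,y) ≤ 2√2·j*_G(x,y)`. -/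
theorem stmt_4 {n : ℕ} (hn : 1 ≤ n) (G : Set (EuclideanSpace ℝ (Fin n)))
    (hGopen : IsOpen G) (hGconn : IsConnected G) (hGproper : G ≠ univ)
    (hGconv : Convex ℝ G)
    (x y : EuclideanSpace ℝ (Fin n)) (hx : x ∈ G) (hy : y ∈ G) :
    ctilde G x y ≤ 2 * Real.sqrt 2 * jStar G x y :=
  stmt_4_general G hGopen hGproper hGconv x y hx hy
end

section
/- In the punctured space G = ℝⁿ \ {0} with n ≥ 1, for the points x = e₁ and y = −e₁ one has c̃_G(x,y) = 4·j*_G(x,y) (indeed c̃_G(x,y) = 2 and j*_G(x,y) = 1/2), so the constant 4 in the inequality c̃_G ≤ 4·j*_G is best possible for G = ℝⁿ \ {0}. -/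
open Metric Set

/-- In `G = ℝⁿ \ {0}` (`n ≥ 1`), for `x = e₁` and `y = −e₁` one has
`c̃_G(x,y) = 2`, `j*_G(x,y) = 1/2`, hence `c̃_G(x,y) = 4·j*_G(x,y)`:
the constant `4` in `c̃_G ≤ 4·j*_G` is best possible for `G = ℝⁿ \ {0}`. -/
theorem stmt_5 {n : ℕ}
    (G : Set (EuclideanSpace ℝ (Fin (n + 1)))) (hG : G = {(0 : EuclideanSpace ℝ (Fin (n + 1)))}ᶜ)
    (e₁ : EuclideanSpace ℝ (Fin (n + 1))) (he₁ : e₁ = EuclideanSpace.single 0 1) :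
    ctilde G e₁ (-e₁) = 2 ∧ jStar G e₁ (-e₁) = 1 / 2 ∧
      ctilde G e₁ (-e₁) = 4 * jStar G e₁ (-e₁) := by
  have hfr : frontier G = {0} := by
    rw [hG, frontier_compl, frontier_eq_closure_inter_closure, closure_singleton,
      closure_compl, interior_singleton]
    simp
  have hnorm : ‖e₁‖ = 1 := by simp [he₁, EuclideanSpace.norm_single]
  have hd0 : dist e₁ 0 = 1 := by simp [dist_eq_norm, hnorm]
  have hd0' : dist (-e₁) 0 = 1 := by simp [dist_eq_norm, hnorm]
  have hdxy : dist e₁ (-e₁) = 2 := by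
    rw [dist_eq_norm, sub_neg_eq_add, ← two_smul ℝ, norm_smul]
    simp [hnorm]
  have h1 : ctilde G e₁ (-e₁) = 2 := by
    rw [ctilde, hfr, image_singleton, csInf_singleton, hd0, hd0', hdxy]
    norm_num
  have h2 : jStar G e₁ (-e₁) = 1 / 2 := by
    rw [jStar, hfr, infDist_singleton, infDist_singleton, hd0, hd0', hdxy]
    norm_num
  exact ⟨h1, h2, by rw [h1, h2]; norm_num⟩
end

section
/- Let x, y be points of the upper half-space ℍⁿ with |x−y| ≤ √((xₙ−yₙ)² + |xₙ²−yₙ²|). Then c̃_{ℍⁿ}(x,y) = |x−y| / max{xₙ, yₙ}. -/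
open Metric Set

def upperHalfSpace (n : ℕ) : Set (EuclideanSpace ℝ (Fin (n + 1))) :=
  {x | 0 < x (Fin.last n)}

def upperHalfSpaceBdry (n : ℕ) : Set (EuclideanSpace ℝ (Fin (n + 1))) :=
  {x | x (Fin.last n) = 0}

noncomputable def ctildeH {n : ℕ} (x y : EuclideanSpace ℝ (Fin (n + 1))) : ℝ :=
  dist x y / sInf ((fun z => max (dist x z) (dist y z)) '' upperHalfSpaceBdry n)

/-! For `y ≤ x` in height, the infimum defining `c̃` is attained at the foot `z₀` of `x` on `∂ℍⁿ`:
no boundary point is closer than `xₙ` to `x`, and by Pythagoras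
`|y - z₀|² = |x - y|² - (xₙ - yₙ)² + yₙ²`, which the hypothesis bounds by `xₙ²`. -/

namespace EuclideanSpace

variable {ι : Type*} [Fintype ι] [DecidableEq ι]

theorem dist_update_sq (x y : EuclideanSpace ℝ ι) (i : ι) (c : ℝ) :
    dist y (WithLp.toLp 2 (Function.update x.ofLp i c)) ^ 2
      = dist y x ^ 2 - (y i - x i) ^ 2 + (y i - c) ^ 2 := by
  simp only [PiLp.dist_sq_eq_of_L2, Real.dist_eq, sq_abs,
    ← Finset.add_sum_erase _ _ (Finset.mem_univ i), Function.update_self]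
  have hrest : ∑ j ∈ Finset.univ.erase i, (y j - Function.update x.ofLp i c j) ^ 2
      = ∑ j ∈ Finset.univ.erase i, (y j - x j) ^ 2 :=
    Finset.sum_congr rfl fun j hj => by rw [Function.update_of_ne (Finset.ne_of_mem_erase hj)]
  rw [hrest]
  ring

end EuclideanSpace

theorem ctildeH_comm {n : ℕ} (x y : EuclideanSpace ℝ (Fin (n + 1))) :
    ctildeH x y = ctildeH y x := by
  simp only [ctildeH, dist_comm x y, max_comm (dist x _)]

theorem isLeast_max_dist_upperHalfSpaceBdry {n : ℕ} (x y : EuclideanSpace ℝ (Fin (n + 1)))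
    (hy : 0 ≤ y (Fin.last n)) (hyx : y (Fin.last n) ≤ x (Fin.last n))
    (h : dist x y ≤
      Real.sqrt ((x (Fin.last n) - y (Fin.last n)) ^ 2 +
        |x (Fin.last n) ^ 2 - y (Fin.last n) ^ 2|)) :
    IsLeast ((fun z => max (dist x z) (dist y z)) '' upperHalfSpaceBdry n) (x (Fin.last n)) := by
  set L := Fin.last n
  have hx : 0 ≤ x L := hy.trans hyx
  have hxy : dist x y ^ 2 ≤ (x L - y L) ^ 2 + (x L ^ 2 - y L ^ 2) := by
    rwa [Real.le_sqrt dist_nonneg (by positivity), abs_of_nonneg (by nlinarith)] at h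
  have hlower : ∀ z ∈ upperHalfSpaceBdry n, x L ≤ dist x z := fun z hz => by
    simpa [abs_of_nonneg hx, Real.dist_eq, show z L = 0 from hz] using
      PiLp.dist_apply_le x z L
  set z₀ := WithLp.toLp 2 (Function.update x.ofLp L 0)
  have hz₀ : z₀ ∈ upperHalfSpaceBdry n := by simp [upperHalfSpaceBdry, z₀, L]
  have hxz₀ : dist x z₀ = x L := by
    rw [← pow_left_inj₀ dist_nonneg hx two_ne_zero, EuclideanSpace.dist_update_sq]
    simp
  have hyz₀ : dist y z₀ ≤ x L := by
    rw [← pow_le_pow_iff_left₀ dist_nonneg hx two_ne_zero, EuclideanSpace.dist_update_sq,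
      dist_comm]
    nlinarith
  refine ⟨⟨z₀, hz₀, by simp [hxz₀, hyz₀]⟩, ?_⟩
  rintro _ ⟨z, hz, rfl⟩
  exact (hlower z hz).trans (le_max_left _ _)

/-- If `x, y ∈ ℍⁿ` and `|x−y| ≤ √((xₙ−yₙ)² + |xₙ²−yₙ²|)`, then
`c̃_{ℍⁿ}(x,y) = |x−y| / max{xₙ, yₙ}`. -/
theorem stmt_6 {n : ℕ} (x y : EuclideanSpace ℝ (Fin (n + 1)))
    (hx : x ∈ upperHalfSpace n) (hy : y ∈ upperHalfSpace n)
    (h : dist x y ≤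
      Real.sqrt ((x (Fin.last n) - y (Fin.last n)) ^ 2 +
        |x (Fin.last n) ^ 2 - y (Fin.last n) ^ 2|)) :
    ctildeH x y = dist x y / max (x (Fin.last n)) (y (Fin.last n)) := by
  wlog hyx : y (Fin.last n) ≤ x (Fin.last n) generalizing x y
  · rw [ctildeH_comm, max_comm, dist_comm]
    refine this y x hy hx ?_ (le_of_not_ge hyx)
    rwa [dist_comm, abs_sub_comm, ← neg_sub, neg_sq]
  rw [ctildeH, (isLeast_max_dist_upperHalfSpaceBdry x y hy.le hyx h).csInf_eq,
    max_eq_left hyx]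
end

section
/- Let x, y be points of the upper half-space ℍⁿ with |x−y| > √((xₙ−yₙ)² + |xₙ²−yₙ²|). Then c̃_{ℍⁿ}(x,y) = 2·√((|x−y|² − (xₙ−yₙ)²) / (|x−y|² + 4·xₙ·yₙ)). Equivalently, in this case inf_{z∈∂ℍⁿ} max{|x−z|, |y−z|} = (|x−y|/2)·√((|x−y|² + 4·xₙ·yₙ) / (|x−y|² − (xₙ−yₙ)²)). -/
/-!
For `z` on the boundary, `|x − z|² = |x' − z|² + xₙ²`, where `x'` is the orthogonal projection
of `x` onto `∂ℍⁿ`. With `L = |x' − y'|`, every `z` has `|x' − z| ≥ t` or `|y' − z| ≥ L − t` by the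
triangle inequality, so `max{|x − z|, |y − z|} ≥ √(t² + xₙ²)` as soon as `t` balances the two
heights: `t² + xₙ² = (L − t)² + yₙ²`. The hypothesis is exactly `|xₙ² − yₙ²| < L²`, i.e.
`0 < t < L`, and then the point of the segment `[x', y']` at distance `t` from `x'` attains
the bound.
-/

open Metric Set

section TwoPointMinimax

theorem sqrt_sq_add_sq_le_max_sqrt_dist {α : Type*} [PseudoMetricSpace α] {p q : α} (z : α)
    {a b t s : ℝ} (ht : 0 ≤ t) (hs : 0 ≤ s) (hts : t + s ≤ dist p q)
    (heq : t ^ 2 + a ^ 2 = s ^ 2 + b ^ 2) :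
    √(t ^ 2 + a ^ 2) ≤ max √(dist p z ^ 2 + a ^ 2) √(dist q z ^ 2 + b ^ 2) := by
  rcases le_or_gt t (dist p z) with hpz | hpz
  · exact le_max_of_le_left (Real.sqrt_le_sqrt (by gcongr))
  · have hqz : s ≤ dist q z := by
      linarith [dist_triangle p z q, dist_comm z q]
    rw [heq]
    exact le_max_of_le_right (Real.sqrt_le_sqrt (by gcongr))

variable {E : Type*} [NormedAddCommGroup E] [NormedSpace ℝ E]

theorem exists_mem_segment_dist_eq {p q : E} {t s : ℝ} (ht : 0 ≤ t) (hs : 0 ≤ s)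
    (hts : t + s = dist p q) : ∃ z ∈ segment ℝ p q, dist p z = t ∧ dist q z = s := by
  have hc : t / dist p q * dist p q = t := div_mul_cancel_of_imp fun h => by linarith
  have hc0 : 0 ≤ t / dist p q := div_nonneg ht dist_nonneg
  have hc1 : t / dist p q ≤ 1 := div_le_one_of_le₀ (by linarith) dist_nonneg
  refine ⟨AffineMap.lineMap p q (t / dist p q), ?_, ?_, ?_⟩
  · rw [segment_eq_image_lineMap]
    exact mem_image_of_mem _ ⟨hc0, hc1⟩
  · rw [dist_comm, dist_lineMap_left, Real.norm_of_nonneg hc0, hc]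
  · rw [dist_comm, dist_lineMap_right, Real.norm_of_nonneg (by linarith), sub_mul, hc]
    linarith

theorem isLeast_max_sqrt_dist {S : Set E} (hS : Convex ℝ S) {p q : E} (hp : p ∈ S) (hq : q ∈ S)
    {a b t s : ℝ} (ht : 0 ≤ t) (hs : 0 ≤ s) (hts : t + s = dist p q)
    (heq : t ^ 2 + a ^ 2 = s ^ 2 + b ^ 2) :
    IsLeast ((fun z => max √(dist p z ^ 2 + a ^ 2) √(dist q z ^ 2 + b ^ 2)) '' S)
      √(t ^ 2 + a ^ 2) := by
  refine ⟨?_, ?_⟩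
  · obtain ⟨z, hz, hpz, hqz⟩ := exists_mem_segment_dist_eq ht hs hts
    refine ⟨z, hS.segment_subset hp hq hz, ?_⟩
    simp only [hpz, hqz, ← heq, max_self]
  · rintro _ ⟨z, -, rfl⟩
    exact sqrt_sq_add_sq_le_max_sqrt_dist z ht hs hts.le heq

theorem isLeast_max_sqrt_dist_of_abs_sq_sub_sq_lt {S : Set E} (hS : Convex ℝ S) {p q : E}
    (hp : p ∈ S) (hq : q ∈ S) {a b : ℝ} (hab : |a ^ 2 - b ^ 2| < dist p q ^ 2) :
    IsLeast ((fun z => max √(dist p z ^ 2 + a ^ 2) √(dist q z ^ 2 + b ^ 2)) '' S)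
      √(((dist p q ^ 2 + b ^ 2 - a ^ 2) / (2 * dist p q)) ^ 2 + a ^ 2) := by
  set L := dist p q
  have hL : 0 < L := dist_nonneg.lt_of_ne (sq_pos_iff.mp ((abs_nonneg _).trans_lt hab)).symm
  obtain ⟨hab_lo, hab_hi⟩ := abs_lt.mp hab
  apply isLeast_max_sqrt_dist hS hp hq (s := (L ^ 2 + a ^ 2 - b ^ 2) / (2 * L))
  · exact div_nonneg (by linarith) (by positivity)
  · exact div_nonneg (by linarith) (by positivity)
  · field_simp
    ring
  · field_simp
    ring

end TwoPointMinimax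

theorem sqrt_sq_div_add_sq_eq_mul_sqrt {a b d L : ℝ} (hd : 0 ≤ d) (hL : L ≠ 0)
    (hdL : L ^ 2 = d ^ 2 - (a - b) ^ 2) :
    √(((L ^ 2 + b ^ 2 - a ^ 2) / (2 * L)) ^ 2 + a ^ 2) =
      d / 2 * √((d ^ 2 + 4 * a * b) / (d ^ 2 - (a - b) ^ 2)) := by
  rw [← hdL]
  have hsq : ((L ^ 2 + b ^ 2 - a ^ 2) / (2 * L)) ^ 2 + a ^ 2 =
      (d / 2) ^ 2 * ((d ^ 2 + 4 * a * b) / L ^ 2) := by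
    field_simp
    linear_combination (L ^ 2 + d ^ 2 + (a + b) ^ 2) * hdL
  rw [hsq, Real.sqrt_mul (by positivity), Real.sqrt_sq (by positivity)]

section UpperHalfSpace

variable {n : ℕ}

noncomputable def horizontalProj (x : EuclideanSpace ℝ (Fin (n + 1))) :
    EuclideanSpace ℝ (Fin (n + 1)) :=
  WithLp.toLp 2 (Function.update x.ofLp (Fin.last n) 0)

theorem horizontalProj_mem_upperHalfSpaceBdry (x : EuclideanSpace ℝ (Fin (n + 1))) :
    horizontalProj x ∈ upperHalfSpaceBdry n := by
  simp [horizontalProj, upperHalfSpaceBdry]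

theorem horizontalProj_eq_self {z : EuclideanSpace ℝ (Fin (n + 1))}
    (hz : z ∈ upperHalfSpaceBdry n) : horizontalProj z = z := by
  ext i
  by_cases hi : i = Fin.last n
  · subst hi
    simpa [horizontalProj] using hz.symm
  · simp [horizontalProj, hi]

theorem dist_sq_eq_dist_horizontalProj_sq_add (u v : EuclideanSpace ℝ (Fin (n + 1))) :
    dist u v ^ 2 =
      dist (horizontalProj u) (horizontalProj v) ^ 2 + (u (Fin.last n) - v (Fin.last n)) ^ 2 := by
  simp only [EuclideanSpace.dist_eq, Fin.sum_univ_castSucc]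
  rw [Real.sq_sqrt (by positivity), Real.sq_sqrt (by positivity)]
  simp [horizontalProj, Fin.castSucc_ne_last, Real.dist_eq, sq_abs]

theorem dist_eq_sqrt_of_mem_upperHalfSpaceBdry (x : EuclideanSpace ℝ (Fin (n + 1)))
    {z : EuclideanSpace ℝ (Fin (n + 1))} (hz : z ∈ upperHalfSpaceBdry n) :
    dist x z = √(dist (horizontalProj x) z ^ 2 + x (Fin.last n) ^ 2) := by
  have hsplit := dist_sq_eq_dist_horizontalProj_sq_add x z
  rw [horizontalProj_eq_self hz, show z (Fin.last n) = 0 from hz, sub_zero] at hsplit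
  rw [← hsplit, Real.sqrt_sq dist_nonneg]

theorem convex_upperHalfSpaceBdry : Convex ℝ (upperHalfSpaceBdry n) :=
  convex_hyperplane
    (EuclideanSpace.proj (Fin.last n) : EuclideanSpace ℝ (Fin (n + 1)) →L[ℝ] ℝ).isLinear 0

end UpperHalfSpace

theorem stmt_7_general {n : ℕ} (x y : EuclideanSpace ℝ (Fin (n + 1)))
    (h : Real.sqrt ((x (Fin.last n) - y (Fin.last n)) ^ 2 +
        |x (Fin.last n) ^ 2 - y (Fin.last n) ^ 2|) < dist x y) :
    ctildeH x y =
      2 * Real.sqrt ((dist x y ^ 2 - (x (Fin.last n) - y (Fin.last n)) ^ 2) /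
        (dist x y ^ 2 + 4 * x (Fin.last n) * y (Fin.last n))) ∧
    sInf ((fun z => max (dist x z) (dist y z)) '' upperHalfSpaceBdry n) =
      (dist x y / 2) * Real.sqrt ((dist x y ^ 2 + 4 * x (Fin.last n) * y (Fin.last n)) /
        (dist x y ^ 2 - (x (Fin.last n) - y (Fin.last n)) ^ 2)) := by
  unfold ctildeH
  set a := x (Fin.last n)
  set b := y (Fin.last n)
  set d := dist x y
  have hd : 0 < d := (Real.sqrt_nonneg _).trans_lt h
  have hL2 : dist (horizontalProj x) (horizontalProj y) ^ 2 = d ^ 2 - (a - b) ^ 2 := by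
    linarith [dist_sq_eq_dist_horizontalProj_sq_add x y]
  have hab : |a ^ 2 - b ^ 2| < dist (horizontalProj x) (horizontalProj y) ^ 2 := by
    linarith [Real.lt_sq_of_sqrt_lt h]
  have hL : dist (horizontalProj x) (horizontalProj y) ≠ 0 :=
    sq_pos_iff.mp ((abs_nonneg _).trans_lt hab)
  have hinf : sInf ((fun z => max (dist x z) (dist y z)) '' upperHalfSpaceBdry n) =
      d / 2 * √((d ^ 2 + 4 * a * b) / (d ^ 2 - (a - b) ^ 2)) := by
    rw [image_congr fun z hz => by rw [dist_eq_sqrt_of_mem_upperHalfSpaceBdry x hz,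
        dist_eq_sqrt_of_mem_upperHalfSpaceBdry y hz],
      (isLeast_max_sqrt_dist_of_abs_sq_sub_sq_lt convex_upperHalfSpaceBdry
        (horizontalProj_mem_upperHalfSpaceBdry x) (horizontalProj_mem_upperHalfSpaceBdry y)
        hab).csInf_eq,
      sqrt_sq_div_add_sq_eq_mul_sqrt hd.le hL hL2]
  refine ⟨?_, hinf⟩
  rw [hinf, ← inv_div (d ^ 2 - (a - b) ^ 2), Real.sqrt_inv]
  field_simp

/-- If `x, y ∈ ℍⁿ` and `|x−y| > √((xₙ−yₙ)² + |xₙ²−yₙ²|)`, then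
`c̃_{ℍⁿ}(x,y) = 2·√((|x−y|² − (xₙ−yₙ)²)/(|x−y|² + 4 xₙ yₙ))`; equivalently
`inf_{z∈∂ℍⁿ} max{|x−z|,|y−z|} = (|x−y|/2)·√((|x−y|² + 4 xₙ yₙ)/(|x−y|² − (xₙ−yₙ)²))`. -/
theorem stmt_7 {n : ℕ} (x y : EuclideanSpace ℝ (Fin (n + 1)))
    (hx : x ∈ upperHalfSpace n) (hy : y ∈ upperHalfSpace n)
    (h : Real.sqrt ((x (Fin.last n) - y (Fin.last n)) ^ 2 +
        |x (Fin.last n) ^ 2 - y (Fin.last n) ^ 2|) < dist x y) :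
    ctildeH x y =
      2 * Real.sqrt ((dist x y ^ 2 - (x (Fin.last n) - y (Fin.last n)) ^ 2) /
        (dist x y ^ 2 + 4 * x (Fin.last n) * y (Fin.last n))) ∧
    sInf ((fun z => max (dist x z) (dist y z)) '' upperHalfSpaceBdry n) =
      (dist x y / 2) * Real.sqrt ((dist x y ^ 2 + 4 * x (Fin.last n) * y (Fin.last n)) /
        (dist x y ^ 2 - (x (Fin.last n) - y (Fin.last n)) ^ 2)) :=
  stmt_7_general x y h
end

section
/- For all points x, y of the upper half-space ℍⁿ, the inequalities th(ρ_{ℍⁿ}(x,y)/2) ≤ c̃_{ℍⁿ}(x,y) ≤ 2·th(ρ_{ℍⁿ}(x,y)/2) hold, i.e. |x−y|/√(|x−y|² + 4·xₙ·yₙ) ≤ c̃_{ℍⁿ}(x,y) ≤ 2·|x−y|/√(|x−y|² + 4·xₙ·yₙ), and the constants 1 and 2 are best possible. -/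
open Metric Set

/-- `th(ρ_{ℍⁿ}(x,y)/2) = |x−y| / √(|x−y|² + 4 xₙ yₙ)` for the hyperbolic metric of `ℍⁿ`. -/
noncomputable def thRhoH {n : ℕ} (x y : EuclideanSpace ℝ (Fin (n + 1))) : ℝ :=
  dist x y / Real.sqrt (dist x y ^ 2 + 4 * x (Fin.last n) * y (Fin.last n))

/-! The boundary point `z` minimising `max (|x − z|, |y − z|)` up to a factor `2` is where the
segment from `x` to the mirror image `y*` of `y` in `∂ℍⁿ` crosses `∂ℍⁿ`. Since `|y − z| = |y* − z|`
on the boundary, the triangle inequality gives `|x − y*| / 2 ≤ max (|x − z|, |y − z|)` for every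
boundary `z`, while the crossing point gives `max ≤ |x − y*|`. As `|x − y*|² = |x − y|² + 4 xₙ yₙ`,
this is `th(ρ/2) ≤ c̃ ≤ 2 th(ρ/2)`. On the vertical pair `eₙ, t eₙ` (`t > 1`) one has
`c̃ = (1 + 1/t) th(ρ/2)`, which tends to `th(ρ/2)` as `t → ∞` and to `2 th(ρ/2)` as `t → 1`. -/

open scoped RealInnerProductSpace
open Filter Topology

lemma half_dist_le_max_dist {X : Type*} [PseudoMetricSpace X] {x y y' z : X}
    (hz : dist z y' = dist z y) : dist x y' / 2 ≤ max (dist x z) (dist y z) := by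
  have := dist_triangle x z y'
  rw [hz, dist_comm z] at this
  have := le_max_left (dist x z) (dist y z)
  have := le_max_right (dist x z) (dist y z)
  linarith

section HyperplaneReflection

variable {V : Type*} [NormedAddCommGroup V] [InnerProductSpace ℝ V] {e : V}

/-- The reflection in the hyperplane `e⊥` when `‖e‖ = 1`. -/
noncomputable def hyperplaneReflection (e y : V) : V := y - (2 * ⟪y, e⟫) • e

lemma inner_hyperplaneReflection (he : ‖e‖ = 1) (y : V) :
    ⟪hyperplaneReflection e y, e⟫ = -⟪y, e⟫ := by
  rw [hyperplaneReflection, inner_sub_left, real_inner_smul_left, real_inner_self_eq_norm_sq, he]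
  ring

lemma dist_hyperplaneReflection_sq (he : ‖e‖ = 1) (x y : V) :
    dist x (hyperplaneReflection e y) ^ 2 = dist x y ^ 2 + 4 * ⟪x, e⟫ * ⟪y, e⟫ := by
  rw [dist_eq_norm, dist_eq_norm, hyperplaneReflection,
    show x - (y - (2 * ⟪y, e⟫) • e) = (x - y) + (2 * ⟪y, e⟫) • e by abel,
    norm_add_sq_real, norm_smul, inner_smul_right, inner_sub_left, he, Real.norm_eq_abs,
    mul_one, sq_abs]
  ring

lemma dist_hyperplaneReflection_of_inner_eq_zero (he : ‖e‖ = 1) {z : V} (hz : ⟪z, e⟫ = 0)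
    (y : V) : dist z (hyperplaneReflection e y) = dist z y := by
  have h := dist_hyperplaneReflection_sq he z y
  rw [hz, mul_zero, zero_mul, add_zero] at h
  exact (pow_left_inj₀ dist_nonneg dist_nonneg two_ne_zero).1 h

lemma inner_le_dist_of_inner_eq_zero (he : ‖e‖ = 1) (x : V) {z : V} (hz : ⟪z, e⟫ = 0) :
    ⟪x, e⟫ ≤ dist x z := by
  simpa [inner_sub_left, hz, he, dist_eq_norm] using real_inner_le_norm (x - z) e

lemma exists_inner_eq_zero_max_dist_le (he : ‖e‖ = 1) {x y : V} (hx : 0 < ⟪x, e⟫)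
    (hy : 0 < ⟪y, e⟫) : ∃ z, ⟪z, e⟫ = 0 ∧
      max (dist x z) (dist y z) ≤ dist x (hyperplaneReflection e y) := by
  set s := ⟪x, e⟫ / (⟪x, e⟫ + ⟪y, e⟫)
  have hs0 : 0 ≤ s := by positivity
  have hs1 : s ≤ 1 := div_le_one_of_le₀ (by linarith) (by positivity)
  have hz : ⟪AffineMap.lineMap x (hyperplaneReflection e y) s, e⟫ = 0 := by
    rw [AffineMap.lineMap_apply_module, inner_add_left, real_inner_smul_left,
      real_inner_smul_left, inner_hyperplaneReflection he]
    have hs : s * (⟪x, e⟫ + ⟪y, e⟫) = ⟪x, e⟫ := div_mul_cancel₀ _ (by positivity)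
    linear_combination -hs
  refine ⟨_, hz, max_le ?_ ?_⟩
  · rw [dist_left_lineMap, Real.norm_eq_abs, abs_of_nonneg hs0]
    exact mul_le_of_le_one_left dist_nonneg hs1
  · rw [dist_comm, ← dist_hyperplaneReflection_of_inner_eq_zero he hz, dist_lineMap_right,
      Real.norm_eq_abs, abs_of_nonneg (sub_nonneg.2 hs1)]
    exact mul_le_of_le_one_left dist_nonneg (by linarith)

lemma sInf_max_dist_mem_Icc (he : ‖e‖ = 1) {x y : V} (hx : 0 < ⟪x, e⟫) (hy : 0 < ⟪y, e⟫) :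
    sInf ((fun z => max (dist x z) (dist y z)) '' {z | ⟪z, e⟫ = 0}) ∈
      Icc (dist x (hyperplaneReflection e y) / 2) (dist x (hyperplaneReflection e y)) := by
  obtain ⟨z₀, hz₀, hz₀_le⟩ := exists_inner_eq_zero_max_dist_le he hx hy
  have lower : ∀ r ∈ (fun z => max (dist x z) (dist y z)) '' {z | ⟪z, e⟫ = 0},
      dist x (hyperplaneReflection e y) / 2 ≤ r := by
    rintro _ ⟨z, hz, rfl⟩
    exact half_dist_le_max_dist (dist_hyperplaneReflection_of_inner_eq_zero he hz y)
  exact ⟨le_csInf ⟨_, z₀, hz₀, rfl⟩ lower, (csInf_le ⟨_, lower⟩ ⟨z₀, hz₀, rfl⟩).trans hz₀_le⟩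

lemma sInf_max_dist_smul_eq (he : ‖e‖ = 1) {a b : ℝ} (ha : 0 ≤ a) (hab : a ≤ b) :
    sInf ((fun z => max (dist (a • e) z) (dist (b • e) z)) '' {z | ⟪z, e⟫ = 0}) = b := by
  have dist_zero : ∀ t : ℝ, 0 ≤ t → dist (t • e) 0 = t := fun t ht => by
    rw [dist_zero_right, norm_smul, he, mul_one, Real.norm_of_nonneg ht]
  refine IsLeast.csInf_eq ⟨⟨0, inner_zero_left _, ?_⟩, ?_⟩
  · show max (dist (a • e) 0) (dist (b • e) 0) = b
    rw [dist_zero a ha, dist_zero b (ha.trans hab), max_eq_right hab]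
  · rintro _ ⟨z, hz, rfl⟩
    have := inner_le_dist_of_inner_eq_zero he (b • e) hz
    rw [real_inner_smul_left, real_inner_self_eq_norm_sq, he] at this
    exact le_max_of_le_right (by simpa using this)

end HyperplaneReflection

section UpperHalfSpace

variable {n : ℕ}

local notation "eₙ" => EuclideanSpace.single (Fin.last n) (1 : ℝ)

lemma norm_single_last : ‖eₙ‖ = 1 := by simp

lemma inner_single_last (x : EuclideanSpace ℝ (Fin (n + 1))) : ⟪x, eₙ⟫ = x (Fin.last n) := by
  simp [EuclideanSpace.inner_single_right]

lemma upperHalfSpaceBdry_eq : upperHalfSpaceBdry n = {z | ⟪z, eₙ⟫ = 0} := by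
  simp only [upperHalfSpaceBdry, inner_single_last]

lemma thRhoH_eq_div_dist_hyperplaneReflection (x y : EuclideanSpace ℝ (Fin (n + 1))) :
    thRhoH x y = dist x y / dist x (hyperplaneReflection eₙ y) := by
  rw [thRhoH, ← inner_single_last x, ← inner_single_last y,
    ← dist_hyperplaneReflection_sq norm_single_last, Real.sqrt_sq dist_nonneg]

theorem thRhoH_le_ctildeH_and_ctildeH_le_two_mul {x y : EuclideanSpace ℝ (Fin (n + 1))}
    (hx : x ∈ upperHalfSpace n) (hy : y ∈ upperHalfSpace n) :
    thRhoH x y ≤ ctildeH x y ∧ ctildeH x y ≤ 2 * thRhoH x y := by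
  rw [upperHalfSpace, mem_ofPred_eq, ← inner_single_last] at hx hy
  obtain ⟨lower, upper⟩ := sInf_max_dist_mem_Icc norm_single_last hx hy
  rw [← upperHalfSpaceBdry_eq] at lower upper
  have hD : 0 < dist x (hyperplaneReflection eₙ y) := by
    nlinarith [dist_hyperplaneReflection_sq norm_single_last x y, sq_nonneg (dist x y),
      mul_pos hx hy, dist_nonneg (x := x) (y := hyperplaneReflection eₙ y)]
  rw [ctildeH, thRhoH_eq_div_dist_hyperplaneReflection]
  constructor
  · exact div_le_div_of_nonneg_left dist_nonneg (by linarith) upper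
  · rw [mul_div_assoc', div_le_div_iff₀ (by linarith) hD]
    nlinarith [dist_nonneg (x := x) (y := y)]

lemma smul_single_last_mem_upperHalfSpace {t : ℝ} (ht : 0 < t) : t • eₙ ∈ upperHalfSpace n := by
  simpa [upperHalfSpace] using ht

lemma ctildeH_smul_single_last {a b : ℝ} (ha : 0 < a) (hab : a < b) :
    ctildeH (a • eₙ) (b • eₙ) = (1 + a / b) * thRhoH (a • eₙ) (b • eₙ) ∧
      0 < thRhoH (a • eₙ) (b • eₙ) := by
  have hdist : dist (a • eₙ) (b • eₙ) = b - a := by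
    rw [dist_eq_norm, ← sub_smul, norm_smul, norm_single_last, mul_one, Real.norm_eq_abs,
      abs_of_neg (by linarith), neg_sub]
  have hth : thRhoH (a • eₙ) (b • eₙ) = (b - a) / (a + b) := by
    rw [thRhoH, hdist, ← inner_single_last, ← inner_single_last, real_inner_smul_left,
      real_inner_smul_left, real_inner_self_eq_norm_sq, norm_single_last,
      show (b - a) ^ 2 + 4 * (a * 1 ^ 2) * (b * 1 ^ 2) = (a + b) ^ 2 by ring,
      Real.sqrt_sq (by linarith)]
  rw [ctildeH, upperHalfSpaceBdry_eq, sInf_max_dist_smul_eq norm_single_last ha.le hab.le, hdist,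
    hth]
  refine ⟨?_, div_pos (by linarith) (by linarith)⟩
  have hb : b ≠ 0 := by linarith
  have hab' : a + b ≠ 0 := by linarith
  field_simp
  ring

lemma le_one_of_forall_mul_thRhoH_le_ctildeH {c : ℝ}
    (h : ∀ x y : EuclideanSpace ℝ (Fin (n + 1)),
      x ∈ upperHalfSpace n → y ∈ upperHalfSpace n → c * thRhoH x y ≤ ctildeH x y) :
    c ≤ 1 := by
  have bound : ∀ t : ℝ, 1 < t → c ≤ 1 + 1 / t := by
    intro t ht
    obtain ⟨hratio, hpos⟩ := ctildeH_smul_single_last (n := n) one_pos ht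
    have := h _ _ (smul_single_last_mem_upperHalfSpace one_pos)
      (smul_single_last_mem_upperHalfSpace (one_pos.trans ht))
    rw [hratio] at this
    exact le_of_mul_le_mul_right this hpos
  refine ge_of_tendsto ?_ ((eventually_gt_atTop 1).mono bound)
  simpa using tendsto_inv_atTop_zero.const_add (1 : ℝ)

lemma two_le_of_forall_ctildeH_le_mul_thRhoH {c : ℝ}
    (h : ∀ x y : EuclideanSpace ℝ (Fin (n + 1)),
      x ∈ upperHalfSpace n → y ∈ upperHalfSpace n → ctildeH x y ≤ c * thRhoH x y) :
    2 ≤ c := by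
  have bound : ∀ t : ℝ, 1 < t → 1 + 1 / t ≤ c := by
    intro t ht
    obtain ⟨hratio, hpos⟩ := ctildeH_smul_single_last (n := n) one_pos ht
    have := h _ _ (smul_single_last_mem_upperHalfSpace one_pos)
      (smul_single_last_mem_upperHalfSpace (one_pos.trans ht))
    rw [hratio] at this
    exact le_of_mul_le_mul_right this hpos
  have lim : Tendsto (fun t : ℝ => 1 + 1 / t) (𝓝[>] 1) (𝓝 2) := by
    have : ContinuousAt (fun t : ℝ => 1 + 1 / t) 1 :=
      continuousAt_const.add (continuousAt_const.div continuousAt_id one_ne_zero)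
    simpa [one_add_one_eq_two] using this.tendsto.mono_left nhdsWithin_le_nhds
  exact le_of_tendsto lim (eventually_mem_nhdsWithin.mono bound)

end UpperHalfSpace

/-- For all `x, y ∈ ℍⁿ`: `th(ρ_{ℍⁿ}(x,y)/2) ≤ c̃_{ℍⁿ}(x,y) ≤ 2 th(ρ_{ℍⁿ}(x,y)/2)`,
and the constants `1` and `2` are best possible. -/
theorem stmt_8 {n : ℕ} :
    (∀ x y : EuclideanSpace ℝ (Fin (n + 1)), x ∈ upperHalfSpace n → y ∈ upperHalfSpace n →
      thRhoH x y ≤ ctildeH x y ∧ ctildeH x y ≤ 2 * thRhoH x y) ∧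
    (∀ c : ℝ, (∀ x y : EuclideanSpace ℝ (Fin (n + 1)),
      x ∈ upperHalfSpace n → y ∈ upperHalfSpace n → c * thRhoH x y ≤ ctildeH x y) → c ≤ 1) ∧
    (∀ c : ℝ, (∀ x y : EuclideanSpace ℝ (Fin (n + 1)),
      x ∈ upperHalfSpace n → y ∈ upperHalfSpace n → ctildeH x y ≤ c * thRhoH x y) → 2 ≤ c) :=
  ⟨fun _ _ hx hy => thRhoH_le_ctildeH_and_ctildeH_le_two_mul hx hy,
    fun _ h => le_one_of_forall_mul_thRhoH_le_ctildeH h,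
    fun _ h => two_le_of_forall_ctildeH_le_mul_thRhoH h⟩
end

section
/- Let x, y be nonzero points of the unit ball 𝔹ⁿ, let μ ∈ [0, π] be the angle between the vectors x and y, and suppose cos(μ) < (| |x|² − |y|² | + 2·min{|x|, |y|}) / (2·max{|x|, |y|}). Then there exists k ∈ (0, μ) with |x|·cos(k) − |y|·cos(μ−k) = (|x|² − |y|²)/2, and for any such k one has c̃_{𝔹ⁿ}(x,y) = |x−y| / √(1 + |x|² − 2·|x|·cos(k)). -/
open Metric Set

noncomputable def ctildeB {n : ℕ} (x y : EuclideanSpace ℝ (Fin (n + 2))) : ℝ :=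
  dist x y /
    sInf ((fun z => max (dist x z) (dist y z)) '' sphere (0 : EuclideanSpace ℝ (Fin (n + 2))) 1)

section Aux
open InnerProductGeometry Real RealInnerProductSpace

variable {E : Type*} [NormedAddCommGroup E] [InnerProductSpace ℝ E]

lemma aux_eq_of_sq_eq {s t : ℝ} (hs : 0 ≤ s) (ht : 0 ≤ t) (h : s ^ 2 = t ^ 2) : s = t := by
  nlinarith

lemma aux_cos_triangle {u v w : E} (hu : ‖u‖ = 1) (hv : ‖v‖ = 1) (hw : ‖w‖ = 1) :
    Real.cos (angle u v + angle v w) ≤ ⟪u, w⟫ := by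
  have hcos1 : Real.cos (angle u v) = ⟪u, v⟫ := by rw [cos_angle, hu, hv]; simp
  have hcos2 : Real.cos (angle v w) = ⟪v, w⟫ := by rw [cos_angle, hv, hw]; simp
  set a := ⟪u, v⟫ with ha
  set b := ⟪v, w⟫ with hb
  have hvu : ⟪v, u⟫ = a := by rw [ha, real_inner_comm]
  have hwv : ⟪w, v⟫ = b := by rw [hb, real_inner_comm]
  have hu2 : ⟪u, u⟫ = 1 := by rw [real_inner_self_eq_norm_sq, hu]; norm_num
  have hv2 : ⟪v, v⟫ = 1 := by rw [real_inner_self_eq_norm_sq, hv]; norm_num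
  have hw2 : ⟪w, w⟫ = 1 := by rw [real_inner_self_eq_norm_sq, hw]; norm_num
  have hsin1 : Real.sin (angle u v) = Real.sqrt (1 - a ^ 2) := by
    rw [sin_eq_sqrt_one_sub_cos_sq (angle_nonneg _ _) (angle_le_pi _ _), hcos1]
  have hsin2 : Real.sin (angle v w) = Real.sqrt (1 - b ^ 2) := by
    rw [sin_eq_sqrt_one_sub_cos_sq (angle_nonneg _ _) (angle_le_pi _ _), hcos2]
  rw [Real.cos_add, hcos1, hcos2, hsin1, hsin2]
  have key : ⟪u - a • v, w - b • v⟫ = ⟪u, w⟫ - a * b := by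
    simp only [inner_sub_left, inner_sub_right, real_inner_smul_left, real_inner_smul_right,
      hv2, hvu, hwv]
    ring
  have hnu : ‖u - a • v‖ ^ 2 = 1 - a ^ 2 := by
    rw [← real_inner_self_eq_norm_sq]
    simp only [inner_sub_left, inner_sub_right, real_inner_smul_left, real_inner_smul_right,
      hv2, hvu, hu2]
    ring
  have hnw : ‖w - b • v‖ ^ 2 = 1 - b ^ 2 := by
    rw [← real_inner_self_eq_norm_sq]
    simp only [inner_sub_left, inner_sub_right, real_inner_smul_left, real_inner_smul_right,
      hv2, hwv, hw2]
    ring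
  have h1 : ‖u - a • v‖ = Real.sqrt (1 - a ^ 2) := by
    rw [← hnu, Real.sqrt_sq (norm_nonneg _)]
  have h2 : ‖w - b • v‖ = Real.sqrt (1 - b ^ 2) := by
    rw [← hnw, Real.sqrt_sq (norm_nonneg _)]
  have habs := abs_real_inner_le_norm (u - a • v) (w - b • v)
  rw [key, h1, h2] at habs
  have := (abs_le.mp habs).1
  linarith

lemma aux_exists_unit_orthogonal {n : ℕ} (x : EuclideanSpace ℝ (Fin (n + 2))) (hx0 : x ≠ 0) :
    ∃ v : EuclideanSpace ℝ (Fin (n + 2)), ‖v‖ = 1 ∧ ⟪x, v⟫ = 0 := by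
  have hbot : (ℝ ∙ x)ᗮ ≠ ⊥ := by
    intro hbot
    have htop : (ℝ ∙ x) = ⊤ := Submodule.orthogonal_eq_bot_iff.mp hbot
    have h1 : Module.finrank ℝ (ℝ ∙ x) = 1 := finrank_span_singleton hx0
    rw [htop, finrank_top, finrank_euclideanSpace_fin] at h1
    omega
  obtain ⟨v0, hv0K, hv0⟩ := Submodule.exists_mem_ne_zero_of_ne_bot hbot
  have hv0n : ‖v0‖ ≠ 0 := norm_ne_zero_iff.mpr hv0
  refine ⟨‖v0‖⁻¹ • v0, ?_, ?_⟩
  · rw [norm_smul, norm_inv, norm_norm, inv_mul_cancel₀ hv0n]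
  · rw [real_inner_smul_right, Submodule.mem_orthogonal_singleton_iff_inner_right.mp hv0K,
      mul_zero]

/-- Existence of the unit vector `v` in the plane construction:
`‖v‖ = 1`, `⟪x, v⟫ = 0`, `⟪y, v⟫ = ‖y‖ * sin (angle x y)`. -/
lemma aux_exists_v {n : ℕ} (x y : EuclideanSpace ℝ (Fin (n + 2)))
    (hx0 : x ≠ 0) (hy0 : y ≠ 0) (hμpos : 0 < angle x y) :
    ∃ v : EuclideanSpace ℝ (Fin (n + 2)),
      ‖v‖ = 1 ∧ ⟪x, v⟫ = 0 ∧ ⟪y, v⟫ = ‖y‖ * Real.sin (angle x y) := by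
  have ha : (0 : ℝ) < ‖x‖ := norm_pos_iff.mpr hx0
  have hb : (0 : ℝ) < ‖y‖ := norm_pos_iff.mpr hy0
  have hxy : ⟪x, y⟫ = ‖x‖ * ‖y‖ * Real.cos (angle x y) := by
    rw [cos_angle]; field_simp
  rcases eq_or_lt_of_le (angle_le_pi x y) with hpi | hlt
  · -- angle = π
    obtain ⟨-, r, hr, rfl⟩ := angle_eq_pi_iff.mp hpi
    obtain ⟨v, hv1, hvx⟩ := aux_exists_unit_orthogonal x hx0
    refine ⟨v, hv1, hvx, ?_⟩
    rw [hpi, Real.sin_pi, mul_zero, real_inner_smul_left, hvx, mul_zero]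
  · -- angle < π
    have hsin : 0 < Real.sin (angle x y) := Real.sin_pos_of_pos_of_lt_pi hμpos hlt
    set μ := angle x y
    set w0 : EuclideanSpace ℝ (Fin (n + 2)) := y - (‖y‖ * Real.cos μ / ‖x‖) • x with hw0
    have hxw0 : ⟪x, w0⟫ = 0 := by
      rw [hw0, inner_sub_right, real_inner_smul_right, real_inner_self_eq_norm_sq, hxy]
      field_simp
      ring
    have hyw0 : ⟪y, w0⟫ = ‖y‖ ^ 2 * Real.sin μ ^ 2 := by
      rw [hw0, inner_sub_right, real_inner_smul_right, real_inner_comm x y, hxy,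
        real_inner_self_eq_norm_sq, Real.sin_sq]
      field_simp
    have hnw0 : ‖w0‖ = ‖y‖ * Real.sin μ := by
      apply aux_eq_of_sq_eq (norm_nonneg _) (by positivity)
      rw [← real_inner_self_eq_norm_sq, hw0]
      rw [inner_sub_left]
      rw [← hw0, hyw0, real_inner_smul_left, hxw0, mul_zero, sub_zero]
      ring
    have hpos : (0 : ℝ) < ‖y‖ * Real.sin μ := by positivity
    refine ⟨(‖y‖ * Real.sin μ)⁻¹ • w0, ?_, ?_, ?_⟩
    · rw [norm_smul, hnw0, Real.norm_eq_abs, abs_of_pos (by positivity),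
        inv_mul_cancel₀ (ne_of_gt hpos)]
    · rw [real_inner_smul_right, hxw0, mul_zero]
    · rw [real_inner_smul_right, hyw0]
      field_simp

end Aux

set_option maxHeartbeats 1000000 in
open InnerProductGeometry Real RealInnerProductSpace in
/-- If `x, y ∈ 𝔹ⁿ` are nonzero, `μ` is the angle between `x` and `y`, and
`cos μ < (||x|²−|y|²| + 2 min{|x|,|y|}) / (2 max{|x|,|y|})`, then there is a
`k ∈ (0, μ)` with `|x| cos k − |y| cos(μ−k) = (|x|²−|y|²)/2`, and for any such `k`,
`c̃_{𝔹ⁿ}(x,y) = |x−y| / √(1 + |x|² − 2|x| cos k)`. -/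
theorem stmt_10 {n : ℕ} (x y : EuclideanSpace ℝ (Fin (n + 2)))
    (hx : x ∈ ball (0 : EuclideanSpace ℝ (Fin (n + 2))) 1)
    (hy : y ∈ ball (0 : EuclideanSpace ℝ (Fin (n + 2))) 1)
    (hx0 : x ≠ 0) (hy0 : y ≠ 0)
    (μ : ℝ) (hμ : μ = InnerProductGeometry.angle x y)
    (h : Real.cos μ < (|‖x‖ ^ 2 - ‖y‖ ^ 2| + 2 * min ‖x‖ ‖y‖) / (2 * max ‖x‖ ‖y‖)) :
    (∃ k ∈ Ioo (0 : ℝ) μ,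
      ‖x‖ * Real.cos k - ‖y‖ * Real.cos (μ - k) = (‖x‖ ^ 2 - ‖y‖ ^ 2) / 2) ∧
    ∀ k ∈ Ioo (0 : ℝ) μ,
      ‖x‖ * Real.cos k - ‖y‖ * Real.cos (μ - k) = (‖x‖ ^ 2 - ‖y‖ ^ 2) / 2 →
        ctildeB x y = dist x y / Real.sqrt (1 + ‖x‖ ^ 2 - 2 * ‖x‖ * Real.cos k) := by
  have ha : (0:ℝ) < ‖x‖ := norm_pos_iff.mpr hx0
  have hb : (0:ℝ) < ‖y‖ := norm_pos_iff.mpr hy0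
  have ha1 : ‖x‖ < 1 := mem_ball_zero_iff.mp hx
  have hb1 : ‖y‖ < 1 := mem_ball_zero_iff.mp hy
  have hμ0 : 0 ≤ μ := by rw [hμ]; exact angle_nonneg x y
  have hμpi : μ ≤ π := by rw [hμ]; exact angle_le_pi x y
  have hxy : ⟪x, y⟫ = ‖x‖ * ‖y‖ * Real.cos μ := by
    rw [hμ, cos_angle]; field_simp
  have hmaxpos : (0:ℝ) < 2 * max ‖x‖ ‖y‖ := by
    have := le_max_left ‖x‖ ‖y‖; nlinarith
  have hcos1 : Real.cos μ < 1 := by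
    apply lt_of_lt_of_le h
    rw [div_le_one hmaxpos]
    rcases le_total ‖y‖ ‖x‖ with hba | hab
    · rw [min_eq_right hba, max_eq_left hba,
        abs_of_nonneg (by nlinarith : (0:ℝ) ≤ ‖x‖^2 - ‖y‖^2)]
      nlinarith
    · rw [min_eq_left hab, max_eq_right hab,
        abs_of_nonpos (by nlinarith : ‖x‖^2 - ‖y‖^2 ≤ 0)]
      nlinarith
  have hμpos : 0 < μ := by
    rcases hμ0.lt_or_eq with h' | h'
    · exact h'
    · exfalso; rw [← h', Real.cos_zero] at hcos1; exact lt_irrefl 1 hcos1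
  have hends : ‖x‖ * Real.cos μ - ‖y‖ < (‖x‖^2 - ‖y‖^2)/2 ∧
      (‖x‖^2 - ‖y‖^2)/2 < ‖x‖ - ‖y‖ * Real.cos μ := by
    rcases le_total ‖y‖ ‖x‖ with hba | hab
    · rw [min_eq_right hba, max_eq_left hba,
        abs_of_nonneg (by nlinarith : (0:ℝ) ≤ ‖x‖^2 - ‖y‖^2),
        lt_div_iff₀ (show (0:ℝ) < 2*‖x‖ by nlinarith)] at h
      constructor
      · nlinarith
      · nlinarith [mul_nonneg (sub_nonneg.mpr hba) (by nlinarith : (0:ℝ) ≤ 2 - ‖x‖ - ‖y‖),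
          mul_pos hb (sub_pos.mpr hcos1)]
    · rw [min_eq_left hab, max_eq_right hab,
        abs_of_nonpos (by nlinarith : ‖x‖^2 - ‖y‖^2 ≤ 0),
        lt_div_iff₀ (show (0:ℝ) < 2*‖y‖ by nlinarith)] at h
      constructor
      · nlinarith [mul_nonneg (sub_nonneg.mpr hab) (by nlinarith : (0:ℝ) ≤ 2 - ‖x‖ - ‖y‖),
          mul_pos ha (sub_pos.mpr hcos1)]
      · nlinarith
  obtain ⟨hA, hB⟩ := hends
  set f : ℝ → ℝ := fun t => ‖x‖ * Real.cos t - ‖y‖ * Real.cos (μ - t) with hf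
  have hfc : ContinuousOn f (Icc 0 μ) := by
    apply Continuous.continuousOn
    fun_prop
  have hfμ : f μ = ‖x‖ * Real.cos μ - ‖y‖ := by rw [hf]; simp
  have hf0 : f 0 = ‖x‖ - ‖y‖ * Real.cos μ := by rw [hf]; simp
  have hmem : (‖x‖^2 - ‖y‖^2)/2 ∈ Ioo (f μ) (f 0) := by
    rw [hfμ, hf0]; exact ⟨hA, hB⟩
  obtain ⟨k₀, hk₀mem, hk₀eq⟩ := intermediate_value_Ioo' (le_of_lt hμpos) hfc hmem
  refine ⟨⟨k₀, hk₀mem, hk₀eq⟩, ?_⟩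
  intro k hk hkeq
  obtain ⟨hkpos, hkμ⟩ := hk
  have hkpi : k ≤ π := le_trans (le_of_lt hkμ) hμpi
  have hq : (0:ℝ) < 1 + ‖x‖^2 - 2*‖x‖*Real.cos k := by nlinarith [Real.cos_le_one k]
  set m := Real.sqrt (1 + ‖x‖^2 - 2*‖x‖*Real.cos k) with hm
  have hmpos : 0 < m := Real.sqrt_pos.mpr hq
  have hm2 : m^2 = 1 + ‖x‖^2 - 2*‖x‖*Real.cos k := Real.sq_sqrt (le_of_lt hq)
  have hm2y : m^2 = 1 + ‖y‖^2 - 2*‖y‖*Real.cos (μ - k) := by rw [hm2]; linarith [hkeq]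
  -- lower bound
  have hlb : ∀ z ∈ sphere (0 : EuclideanSpace ℝ (Fin (n+2))) 1,
      m ≤ max (dist x z) (dist y z) := by
    intro z hz
    have hz1 : ‖z‖ = 1 := mem_sphere_zero_iff_norm.mp hz
    by_contra hcon
    push_neg at hcon
    rw [max_lt_iff] at hcon
    obtain ⟨hdx, hdy⟩ := hcon
    have hix : ‖x‖ * Real.cos k < ⟪x, z⟫ := by
      have h2 : dist x z ^ 2 < m ^ 2 := pow_lt_pow_left₀ hdx dist_nonneg (by norm_num)
      rw [dist_eq_norm, norm_sub_sq_real, hz1, one_pow, hm2] at h2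
      linarith
    have hiy : ‖y‖ * Real.cos (μ - k) < ⟪y, z⟫ := by
      have h2 : dist y z ^ 2 < m ^ 2 := pow_lt_pow_left₀ hdy dist_nonneg (by norm_num)
      rw [dist_eq_norm, norm_sub_sq_real, hz1, one_pow, hm2y] at h2
      linarith
    have hα : angle x z < k := by
      by_contra hge
      push_neg at hge
      have h3 := Real.cos_le_cos_of_nonneg_of_le_pi (le_of_lt hkpos) (angle_le_pi x z) hge
      rw [cos_angle, hz1, mul_one] at h3
      have h4 := (div_le_iff₀ ha).mp h3
      linarith
    have hβ : angle z y < μ - k := by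
      by_contra hge
      push_neg at hge
      have h3 := Real.cos_le_cos_of_nonneg_of_le_pi (by linarith : (0:ℝ) ≤ μ - k)
        (angle_le_pi z y) hge
      rw [cos_angle, hz1, one_mul, real_inner_comm y z] at h3
      have h4 := (div_le_iff₀ hb).mp h3
      linarith
    have hu1 : ‖(‖x‖⁻¹ • x : EuclideanSpace ℝ (Fin (n+2)))‖ = 1 := by
      rw [norm_smul, norm_inv, norm_norm, inv_mul_cancel₀ (ne_of_gt ha)]
    have hw1 : ‖(‖y‖⁻¹ • y : EuclideanSpace ℝ (Fin (n+2)))‖ = 1 := by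
      rw [norm_smul, norm_inv, norm_norm, inv_mul_cancel₀ (ne_of_gt hb)]
    have htri := aux_cos_triangle hu1 hz1 hw1
    rw [angle_smul_left_of_pos x z (inv_pos.mpr ha),
      angle_smul_right_of_pos z y (inv_pos.mpr hb)] at htri
    have hiuw : ⟪(‖x‖⁻¹ • x : EuclideanSpace ℝ (Fin (n+2))), ‖y‖⁻¹ • y⟫ = Real.cos μ := by
      rw [real_inner_smul_left, real_inner_smul_right, hxy]
      field_simp
    rw [hiuw] at htri
    have hsum : angle x z + angle z y < μ := by linarith
    have hcc := Real.cos_lt_cos_of_nonneg_of_le_pi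
      (add_nonneg (angle_nonneg x z) (angle_nonneg z y)) hμpi hsum
    linarith
  -- membership
  have hμang : 0 < angle x y := by rw [← hμ]; exact hμpos
  obtain ⟨v, hv1, hvx, hvy⟩ := aux_exists_v x y hx0 hy0 hμang
  rw [← hμ] at hvy
  set z₀ : EuclideanSpace ℝ (Fin (n+2)) :=
    Real.cos k • (‖x‖⁻¹ • x) + Real.sin k • v with hz₀
  have hvx' : ⟪v, x⟫ = 0 := by rw [real_inner_comm x v]; exact hvx
  have hxx : ⟪x, x⟫ = ‖x‖^2 := real_inner_self_eq_norm_sq x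
  have hvv : ⟪v, v⟫ = 1 := by rw [real_inner_self_eq_norm_sq, hv1]; norm_num
  have hyx : ⟪y, x⟫ = ‖x‖ * ‖y‖ * Real.cos μ := by rw [real_inner_comm x y, hxy]
  have hxz₀ : ⟪x, z₀⟫ = ‖x‖ * Real.cos k := by
    rw [hz₀, inner_add_right, real_inner_smul_right, real_inner_smul_right,
      real_inner_smul_right, hxx, hvx]
    field_simp
    ring
  have hyz₀ : ⟪y, z₀⟫ = ‖y‖ * Real.cos (μ - k) := by
    rw [hz₀, inner_add_right, real_inner_smul_right, real_inner_smul_right,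
      real_inner_smul_right, hyx, hvy, Real.cos_sub]
    field_simp
  have hz₀1 : ‖z₀‖ = 1 := by
    apply aux_eq_of_sq_eq (norm_nonneg _) zero_le_one
    rw [one_pow, ← real_inner_self_eq_norm_sq, hz₀]
    simp only [inner_add_left, inner_add_right, real_inner_smul_left, real_inner_smul_right,
      hxx, hvv, hvx, hvx']
    have hsc := Real.sin_sq_add_cos_sq k
    field_simp
    nlinarith [hsc]
  have hz₀S : z₀ ∈ sphere (0 : EuclideanSpace ℝ (Fin (n+2))) 1 :=
    mem_sphere_zero_iff_norm.mpr hz₀1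
  have hdxz₀ : dist x z₀ = m := by
    apply aux_eq_of_sq_eq dist_nonneg (le_of_lt hmpos)
    rw [dist_eq_norm, norm_sub_sq_real, hz₀1, one_pow, hxz₀, hm2]
    ring
  have hdyz₀ : dist y z₀ = m := by
    apply aux_eq_of_sq_eq dist_nonneg (le_of_lt hmpos)
    rw [dist_eq_norm, norm_sub_sq_real, hz₀1, one_pow, hyz₀, hm2y]
    ring
  set S := (fun z => max (dist x z) (dist y z)) ''
    sphere (0 : EuclideanSpace ℝ (Fin (n+2))) 1 with hS
  have hmS : m ∈ S := ⟨z₀, hz₀S, by simp only; rw [hdxz₀, hdyz₀, max_self]⟩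
  have hlbS : ∀ s ∈ S, m ≤ s := by
    rintro s ⟨z, hzS, rfl⟩
    exact hlb z hzS
  have hinf : sInf S = m :=
    le_antisymm (csInf_le ⟨m, hlbS⟩ hmS) (le_csInf ⟨m, hmS⟩ hlbS)
  unfold ctildeB
  rw [← hS, hinf]
end

section
/- Let x, y be nonzero points of the unit ball 𝔹ⁿ that are not positive multiples of each other, and let μ ∈ (0, π] be the angle between the vectors x and y. Then inf_{z∈S^{n−1}} max{|x−z|, |y−z|} = inf_{k∈[0,μ]} max{√(1 + |x|² − 2·|x|·cos(k)), √(1 + |y|² − 2·|y|·cos(μ−k))}. -/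
open Metric Set InnerProductGeometry Real
open scoped RealInnerProductSpace

variable {V : Type*} [NormedAddCommGroup V] [InnerProductSpace ℝ V]

lemma aux_dist {x z : V} (hz : ‖z‖ = 1) :
    dist x z = Real.sqrt (1 + ‖x‖ ^ 2 - 2 * ‖x‖ * Real.cos (angle x z)) := by
  rw [dist_eq_norm]
  rw [show (1 : ℝ) + ‖x‖ ^ 2 - 2 * ‖x‖ * Real.cos (angle x z)
      = ‖x‖ ^ 2 - 2 * (Real.cos (angle x z) * (‖x‖ * ‖z‖)) + ‖z‖ ^ 2 by rw [hz]; ring]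
  rw [cos_angle_mul_norm_mul_norm, ← norm_sub_sq_real, Real.sqrt_sq (norm_nonneg _)]

lemma aux_core (xh yh zh : V) (hx1 : ‖xh‖ = 1) (hy1 : ‖yh‖ = 1) (hz1 : ‖zh‖ = 1)
    (a b : ℝ) (hixz : ⟪xh, zh⟫ = Real.cos a) (hizy : ⟪zh, yh⟫ = Real.cos b)
    (ha0 : 0 ≤ a) (hap : a ≤ π) (hb0 : 0 ≤ b) (hbp : b ≤ π) :
    Real.cos (a + b) ≤ ⟪xh, yh⟫ := by
  have hnu : ‖xh - Real.cos a • zh‖ = Real.sin a := by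
    have h2 : ‖xh - Real.cos a • zh‖ ^ 2 = Real.sin a ^ 2 := by
      rw [norm_sub_sq_real, real_inner_smul_right, hixz, hx1, norm_smul, hz1]
      simp only [Real.norm_eq_abs, mul_one]
      nlinarith [Real.sin_sq_add_cos_sq a, sq_abs (Real.cos a)]
    have hs := Real.sin_nonneg_of_nonneg_of_le_pi ha0 hap
    nlinarith [norm_nonneg (xh - Real.cos a • zh)]
  have hnv : ‖yh - Real.cos b • zh‖ = Real.sin b := by
    have h2 : ‖yh - Real.cos b • zh‖ ^ 2 = Real.sin b ^ 2 := by
      rw [norm_sub_sq_real, real_inner_smul_right, real_inner_comm zh yh, hizy, hy1,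
        norm_smul, hz1]
      simp only [Real.norm_eq_abs, mul_one]
      nlinarith [Real.sin_sq_add_cos_sq b, sq_abs (Real.cos b)]
    have hs := Real.sin_nonneg_of_nonneg_of_le_pi hb0 hbp
    nlinarith [norm_nonneg (yh - Real.cos b • zh)]
  have hexp : ⟪xh, yh⟫ = ⟪xh - Real.cos a • zh, yh - Real.cos b • zh⟫
      + Real.cos a * Real.cos b := by
    simp only [inner_sub_left, inner_sub_right, real_inner_smul_left, real_inner_smul_right,
      hixz, hizy, real_inner_self_eq_norm_sq, hz1, real_inner_comm zh xh, real_inner_comm yh zh]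
    ring
  have hcs := abs_real_inner_le_norm (xh - Real.cos a • zh) (yh - Real.cos b • zh)
  rw [hnu, hnv] at hcs
  have := (abs_le.1 hcs).1
  rw [Real.cos_add, hexp]
  linarith

lemma aux_angle_triangle (x y z : V) (hx : x ≠ 0) (hy : y ≠ 0) (hz : z ≠ 0) :
    angle x y ≤ angle x z + angle z y := by
  by_cases h : π ≤ angle x z + angle z y
  · exact (angle_le_pi x y).trans h
  push_neg at h
  have hnx : (0:ℝ) < ‖x‖⁻¹ := inv_pos.2 (norm_pos_iff.2 hx)
  have hny : (0:ℝ) < ‖y‖⁻¹ := inv_pos.2 (norm_pos_iff.2 hy)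
  have hnz : (0:ℝ) < ‖z‖⁻¹ := inv_pos.2 (norm_pos_iff.2 hz)
  have hxh1 : ‖‖x‖⁻¹ • x‖ = 1 := by rw [norm_smul]; simp [norm_ne_zero_iff.2 hx]
  have hyh1 : ‖‖y‖⁻¹ • y‖ = 1 := by rw [norm_smul]; simp [norm_ne_zero_iff.2 hy]
  have hzh1 : ‖‖z‖⁻¹ • z‖ = 1 := by rw [norm_smul]; simp [norm_ne_zero_iff.2 hz]
  have haxy : angle (‖x‖⁻¹ • x) (‖y‖⁻¹ • y) = angle x y := by
    rw [angle_smul_left_of_pos _ _ hnx, angle_smul_right_of_pos _ _ hny]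
  have haxz : angle (‖x‖⁻¹ • x) (‖z‖⁻¹ • z) = angle x z := by
    rw [angle_smul_left_of_pos _ _ hnx, angle_smul_right_of_pos _ _ hnz]
  have hazy : angle (‖z‖⁻¹ • z) (‖y‖⁻¹ • y) = angle z y := by
    rw [angle_smul_left_of_pos _ _ hnz, angle_smul_right_of_pos _ _ hny]
  have hixz : ⟪‖x‖⁻¹ • x, ‖z‖⁻¹ • z⟫ = Real.cos (angle x z) := by
    rw [← haxz, ← cos_angle_mul_norm_mul_norm, hxh1, hzh1]; ring
  have hizy : ⟪‖z‖⁻¹ • z, ‖y‖⁻¹ • y⟫ = Real.cos (angle z y) := by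
    rw [← hazy, ← cos_angle_mul_norm_mul_norm, hzh1, hyh1]; ring
  have hixy : ⟪‖x‖⁻¹ • x, ‖y‖⁻¹ • y⟫ = Real.cos (angle x y) := by
    rw [← haxy, ← cos_angle_mul_norm_mul_norm, hxh1, hyh1]; ring
  have hkey := aux_core (‖x‖⁻¹ • x) (‖y‖⁻¹ • y) (‖z‖⁻¹ • z) hxh1 hyh1 hzh1
    (angle x z) (angle z y) hixz hizy (angle_nonneg _ _) (angle_le_pi _ _)
    (angle_nonneg _ _) (angle_le_pi _ _)
  rw [hixy] at hkey
  by_contra hcon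
  push_neg at hcon
  have := Real.strictAntiOn_cos
    ⟨add_nonneg (angle_nonneg _ _) (angle_nonneg _ _), h.le⟩ ⟨angle_nonneg x y, angle_le_pi x y⟩ hcon
  linarith

lemma aux_dist_inner {x z : V} (hz : ‖z‖ = 1) :
    dist x z = Real.sqrt (1 + ‖x‖ ^ 2 - 2 * ⟪x, z⟫) := by
  rw [dist_eq_norm]
  rw [show (1 : ℝ) + ‖x‖ ^ 2 - 2 * ⟪x, z⟫ = ‖x‖ ^ 2 - 2 * ⟪x, z⟫ + ‖z‖ ^ 2 by rw [hz]; ring]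
  rw [← norm_sub_sq_real, Real.sqrt_sq (norm_nonneg _)]

lemma aux_orth {n : ℕ} (x : EuclideanSpace ℝ (Fin (n + 2))) (hx0 : x ≠ 0) :
    ∃ w : EuclideanSpace ℝ (Fin (n + 2)), ‖w‖ = 1 ∧ ⟪x, w⟫ = 0 := by
  have hspan : Submodule.span ℝ {x} ≠ ⊤ := by
    intro hsp
    have h1 : Module.finrank ℝ (Submodule.span ℝ {x}) = 1 := finrank_span_singleton hx0
    rw [hsp] at h1
    have h2 : Module.finrank ℝ (⊤ : Submodule ℝ (EuclideanSpace ℝ (Fin (n + 2))))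
        = n + 2 := by
      rw [finrank_top, finrank_euclideanSpace_fin]
    omega
  have hbot : (Submodule.span ℝ {x})ᗮ ≠ ⊥ := fun h =>
    hspan (Submodule.orthogonal_eq_bot_iff.1 h)
  obtain ⟨w0, hw0mem, hw0⟩ := Submodule.exists_mem_ne_zero_of_ne_bot hbot
  have hw0x : ⟪x, w0⟫ = 0 :=
    (Submodule.mem_orthogonal _ _).1 hw0mem x (Submodule.mem_span_singleton_self x)
  refine ⟨‖w0‖⁻¹ • w0, ?_, ?_⟩
  · rw [norm_smul]; simp [norm_ne_zero_iff.2 hw0]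
  · rw [real_inner_smul_right, hw0x]; ring

lemma aux_construct (xh yh w : V) (hx1 : ‖xh‖ = 1) (hw1 : ‖w‖ = 1) (μ k : ℝ)
    (hixy : ⟪xh, yh⟫ = Real.cos μ) (hwx : ⟪xh, w⟫ = 0) (hwy : ⟪yh, w⟫ = Real.sin μ) :
    ‖Real.cos k • xh + Real.sin k • w‖ = 1 ∧
      ⟪xh, Real.cos k • xh + Real.sin k • w⟫ = Real.cos k ∧
      ⟪yh, Real.cos k • xh + Real.sin k • w⟫ = Real.cos (μ - k) := by
  refine ⟨?_, ?_, ?_⟩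
  · have h2 : ‖Real.cos k • xh + Real.sin k • w‖ ^ 2 = 1 := by
      rw [norm_add_sq_real, real_inner_smul_left, real_inner_smul_right, hwx, norm_smul,
        norm_smul, hx1, hw1]
      simp only [Real.norm_eq_abs, mul_one]
      nlinarith [Real.sin_sq_add_cos_sq k, sq_abs (Real.cos k), sq_abs (Real.sin k)]
    nlinarith [norm_nonneg (Real.cos k • xh + Real.sin k • w)]
  · rw [inner_add_right, real_inner_smul_right, real_inner_smul_right,
      real_inner_self_eq_norm_sq, hx1, hwx]
    ring
  · rw [inner_add_right, real_inner_smul_right, real_inner_smul_right,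
      real_inner_comm xh yh, hixy, hwy, Real.cos_sub]
    ring

set_option maxHeartbeats 1000000 in
lemma aux_exists {n : ℕ} (x y : EuclideanSpace ℝ (Fin (n + 2)))
    (hx0 : x ≠ 0) (hy0 : y ≠ 0) (μ : ℝ) (hμ : μ = angle x y) (hμpos : 0 < μ) (k : ℝ) :
    ∃ z : EuclideanSpace ℝ (Fin (n + 2)), ‖z‖ = 1 ∧
      ⟪x, z⟫ = ‖x‖ * Real.cos k ∧ ⟪y, z⟫ = ‖y‖ * Real.cos (μ - k) := by
  have hnx : (0:ℝ) < ‖x‖ := norm_pos_iff.2 hx0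
  have hny : (0:ℝ) < ‖y‖ := norm_pos_iff.2 hy0
  obtain ⟨xh, hxh⟩ : ∃ v : EuclideanSpace ℝ (Fin (n + 2)), v = ‖x‖⁻¹ • x := ⟨_, rfl⟩
  obtain ⟨yh, hyh⟩ : ∃ v : EuclideanSpace ℝ (Fin (n + 2)), v = ‖y‖⁻¹ • y := ⟨_, rfl⟩
  have hxh1 : ‖xh‖ = 1 := by rw [hxh, norm_smul]; simp [hnx.ne']
  have hyh1 : ‖yh‖ = 1 := by rw [hyh, norm_smul]; simp [hny.ne']
  have hxx : x = ‖x‖ • xh := by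
    rw [hxh, smul_smul, mul_inv_cancel₀ hnx.ne', one_smul]
  have hyy : y = ‖y‖ • yh := by
    rw [hyh, smul_smul, mul_inv_cancel₀ hny.ne', one_smul]
  have hixy : ⟪xh, yh⟫ = Real.cos μ := by
    rw [hμ, cos_angle, hxh, hyh, real_inner_smul_left, real_inner_smul_right]
    field_simp
  have hμπ : μ ≤ π := hμ ▸ angle_le_pi x y
  obtain ⟨w, hw1, hwx, hwy⟩ : ∃ w : EuclideanSpace ℝ (Fin (n + 2)),
      ‖w‖ = 1 ∧ ⟪xh, w⟫ = 0 ∧ ⟪yh, w⟫ = Real.sin μ := by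
    rcases lt_or_eq_of_le hμπ with hlt | heq
    · have hs : 0 < Real.sin μ := Real.sin_pos_of_pos_of_lt_pi hμpos hlt
      have hnrm : ‖yh - Real.cos μ • xh‖ = Real.sin μ := by
        have h2 : ‖yh - Real.cos μ • xh‖ ^ 2 = Real.sin μ ^ 2 := by
          rw [norm_sub_sq_real, real_inner_smul_right, real_inner_comm xh yh, hixy, hyh1,
            norm_smul, hxh1]
          simp only [Real.norm_eq_abs, mul_one]
          nlinarith [Real.sin_sq_add_cos_sq μ, sq_abs (Real.cos μ)]
        nlinarith [norm_nonneg (yh - Real.cos μ • xh)]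
      refine ⟨(Real.sin μ)⁻¹ • (yh - Real.cos μ • xh), ?_, ?_, ?_⟩
      · rw [norm_smul, hnrm, Real.norm_eq_abs, abs_of_pos (inv_pos.2 hs),
          inv_mul_cancel₀ hs.ne']
      · rw [real_inner_smul_right, inner_sub_right, real_inner_smul_right, hixy,
          real_inner_self_eq_norm_sq, hxh1]
        ring
      · rw [real_inner_smul_right, inner_sub_right, real_inner_smul_right,
          real_inner_comm xh yh, hixy, real_inner_self_eq_norm_sq, hyh1]
        have hsc := Real.sin_sq_add_cos_sq μ
        field_simp
        nlinarith
    · have hpi : angle x y = π := by rw [← hμ, heq]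
      obtain ⟨hx0', r, hr, hyr⟩ := angle_eq_pi_iff.1 hpi
      have hrx : ‖r • x‖⁻¹ * r = -‖x‖⁻¹ := by
        rw [norm_smul, Real.norm_eq_abs, abs_of_neg hr, neg_mul, inv_neg, mul_inv, neg_mul]
        field_simp [hr.ne]
      have hyhx : yh = -xh := by
        rw [hyh, hyr, smul_smul, hrx, neg_smul, hxh]
      obtain ⟨w, hw1, hwx⟩ := aux_orth x hx0
      have hwxh : ⟪xh, w⟫ = 0 := by rw [hxh, real_inner_smul_left, hwx]; ring
      refine ⟨w, hw1, hwxh, ?_⟩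
      rw [hyhx, inner_neg_left, hwxh, heq, Real.sin_pi]
      ring
  obtain ⟨hz1, hzx, hzy⟩ := aux_construct xh yh w hxh1 hw1 μ k hixy hwx hwy
  refine ⟨Real.cos k • xh + Real.sin k • w, hz1, ?_, ?_⟩
  · rw [hxx, real_inner_smul_left, hzx, norm_smul, Real.norm_eq_abs, abs_of_pos hnx,
      hxh1, mul_one]
  · rw [hyy, real_inner_smul_left, hzy, norm_smul, Real.norm_eq_abs, abs_of_pos hny,
      hyh1, mul_one]

/-- If `x, y ∈ 𝔹ⁿ` are nonzero and not positive multiples of each other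
(`x/|x| ≠ y/|y|`), and `μ ∈ (0, π]` is the angle between `x` and `y`, then
`inf_{z∈S^{n−1}} max{|x−z|, |y−z|}
  = inf_{k∈[0,μ]} max{√(1+|x|²−2|x|cos k), √(1+|y|²−2|y|cos(μ−k))}`. -/
theorem stmt_11 {n : ℕ} (x y : EuclideanSpace ℝ (Fin (n + 2)))
    (hx : x ∈ ball (0 : EuclideanSpace ℝ (Fin (n + 2))) 1)
    (hy : y ∈ ball (0 : EuclideanSpace ℝ (Fin (n + 2))) 1)
    (hx0 : x ≠ 0) (hy0 : y ≠ 0)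
    (hxy : ‖x‖⁻¹ • x ≠ ‖y‖⁻¹ • y)
    (μ : ℝ) (hμ : μ = InnerProductGeometry.angle x y) :
    sInf ((fun z => max (dist x z) (dist y z)) ''
        sphere (0 : EuclideanSpace ℝ (Fin (n + 2))) 1) =
      sInf ((fun k => max (Real.sqrt (1 + ‖x‖ ^ 2 - 2 * ‖x‖ * Real.cos k))
        (Real.sqrt (1 + ‖y‖ ^ 2 - 2 * ‖y‖ * Real.cos (μ - k)))) '' Icc (0 : ℝ) μ) := by
  have hnx : (0:ℝ) < ‖x‖ := norm_pos_iff.2 hx0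
  have hny : (0:ℝ) < ‖y‖ := norm_pos_iff.2 hy0
  have hμpos : 0 < μ := by
    rcases (hμ ▸ angle_nonneg x y).lt_or_eq with h | h
    · exact h
    · exfalso
      obtain ⟨_, r, hr, hyr⟩ := angle_eq_zero_iff.1 (hμ ▸ h.symm)
      apply hxy
      have hrx : ‖r • x‖⁻¹ * r = ‖x‖⁻¹ := by
        rw [norm_smul, Real.norm_eq_abs, abs_of_pos hr, mul_inv]
        field_simp
      rw [hyr, smul_smul, hrx]
  -- bounded below
  have hSbdd : BddBelow ((fun z => max (dist x z) (dist y z)) ''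
      sphere (0 : EuclideanSpace ℝ (Fin (n + 2))) 1) := by
    refine ⟨0, ?_⟩
    rintro r ⟨z, hz, rfl⟩
    exact le_max_of_le_left dist_nonneg
  have hTbdd : BddBelow ((fun k => max (Real.sqrt (1 + ‖x‖ ^ 2 - 2 * ‖x‖ * Real.cos k))
      (Real.sqrt (1 + ‖y‖ ^ 2 - 2 * ‖y‖ * Real.cos (μ - k)))) '' Icc (0 : ℝ) μ) := by
    refine ⟨0, ?_⟩
    rintro r ⟨k, hk, rfl⟩
    exact le_max_of_le_left (Real.sqrt_nonneg _)
  have hSne : ((fun z => max (dist x z) (dist y z)) ''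
      sphere (0 : EuclideanSpace ℝ (Fin (n + 2))) 1).Nonempty := by
    refine ⟨_, mem_image_of_mem _ (?_ : EuclideanSpace.single (0 : Fin (n+2)) (1:ℝ) ∈ _)⟩
    rw [mem_sphere_zero_iff_norm, EuclideanSpace.norm_single]
    norm_num
  have hTne : ((fun k => max (Real.sqrt (1 + ‖x‖ ^ 2 - 2 * ‖x‖ * Real.cos k))
      (Real.sqrt (1 + ‖y‖ ^ 2 - 2 * ‖y‖ * Real.cos (μ - k)))) '' Icc (0 : ℝ) μ).Nonempty :=
    ⟨_, mem_image_of_mem _ (show (0:ℝ) ∈ Icc (0:ℝ) μ from ⟨le_refl 0, hμpos.le⟩)⟩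
  refine le_antisymm ?_ ?_
  · apply csInf_le_csInf hSbdd hTne
    rintro r ⟨k, hk, rfl⟩
    obtain ⟨z, hz1, hzx, hzy⟩ := aux_exists x y hx0 hy0 μ hμ hμpos k
    refine ⟨z, mem_sphere_zero_iff_norm.2 hz1, ?_⟩
    simp only
    rw [aux_dist_inner hz1, aux_dist_inner hz1, hzx, hzy]
    ring_nf
  · apply le_csInf hSne
    rintro r ⟨z, hzmem, rfl⟩
    have hz1 : ‖z‖ = 1 := mem_sphere_zero_iff_norm.1 hzmem
    have hz0 : z ≠ 0 := by intro h; rw [h] at hz1; simp at hz1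
    have htri : μ ≤ angle x z + angle y z := by
      rw [hμ]
      have h := aux_angle_triangle x y z hx0 hy0 hz0
      rwa [angle_comm z y] at h
    have hk : min (angle x z) μ ∈ Icc (0:ℝ) μ :=
      ⟨le_min (angle_nonneg _ _) hμpos.le, min_le_right _ _⟩
    have h2 : μ - min (angle x z) μ ≤ angle y z := by
      rcases le_total (angle x z) μ with h | h
      · rw [min_eq_left h]; linarith
      · rw [min_eq_right h]; simpa using angle_nonneg y z
    have e1 : Real.sqrt (1 + ‖x‖ ^ 2 - 2 * ‖x‖ * Real.cos (min (angle x z) μ))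
        ≤ dist x z := by
      rw [aux_dist hz1]
      apply Real.sqrt_le_sqrt
      have hc := Real.cos_le_cos_of_nonneg_of_le_pi hk.1 (angle_le_pi x z) (min_le_left _ _)
      nlinarith
    have e2 : Real.sqrt (1 + ‖y‖ ^ 2 - 2 * ‖y‖ * Real.cos (μ - min (angle x z) μ))
        ≤ dist y z := by
      rw [aux_dist hz1]
      apply Real.sqrt_le_sqrt
      have hc := Real.cos_le_cos_of_nonneg_of_le_pi
        (by linarith [hk.2] : 0 ≤ μ - min (angle x z) μ) (angle_le_pi y z) h2
      nlinarith
    calc sInf ((fun k => max (Real.sqrt (1 + ‖x‖ ^ 2 - 2 * ‖x‖ * Real.cos k))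
          (Real.sqrt (1 + ‖y‖ ^ 2 - 2 * ‖y‖ * Real.cos (μ - k)))) '' Icc (0 : ℝ) μ)
        ≤ max (Real.sqrt (1 + ‖x‖ ^ 2 - 2 * ‖x‖ * Real.cos (min (angle x z) μ)))
          (Real.sqrt (1 + ‖y‖ ^ 2 - 2 * ‖y‖ * Real.cos (μ - min (angle x z) μ))) :=
        csInf_le hTbdd (mem_image_of_mem _ hk)
      _ ≤ max (dist x z) (dist y z) := max_le_max e1 e2
end

section
/- For all points x, y of the unit ball 𝔹ⁿ, the inequalities th(ρ_{𝔹ⁿ}(x,y)/2) ≤ c̃_{𝔹ⁿ}(x,y) ≤ 2·th(ρ_{𝔹ⁿ}(x,y)/2) hold, i.e. |x−y|/√(|x−y|² + (1−|x|²)(1−|y|²)) ≤ c̃_{𝔹ⁿ}(x,y) ≤ 2·|x−y|/√(|x−y|² + (1−|x|²)(1−|y|²)), and the constants 1 and 2 are best possible. -/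
open Metric Set

/-- `th(ρ_{𝔹ⁿ}(x,y)/2) = |x−y| / √(|x−y|² + (1−|x|²)(1−|y|²))` for the
hyperbolic metric of `𝔹ⁿ`. -/
noncomputable def thRhoB {n : ℕ} (x y : EuclideanSpace ℝ (Fin (n + 2))) : ℝ :=
  dist x y / Real.sqrt (dist x y ^ 2 + (1 - ‖x‖ ^ 2) * (1 - ‖y‖ ^ 2))

set_option maxHeartbeats 1000000

section AuxCtilde
variable {n : ℕ}
local notation "E'" => EuclideanSpace ℝ (Fin (n + 2))
local notation "⟪" x ", " y "⟫" => @inner ℝ _ _ x y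

private noncomputable def Dd (x y : E') : ℝ :=
  dist x y ^ 2 + (1 - ‖x‖ ^ 2) * (1 - ‖y‖ ^ 2)

private lemma Dd_eq (x y : E') : Dd x y = 1 - 2 * ⟪x, y⟫ + ‖x‖ ^ 2 * ‖y‖ ^ 2 := by
  rw [Dd, dist_eq_norm, norm_sub_sq_real]; ring

private lemma Dd_comm (x y : E') : Dd x y = Dd y x := by
  rw [Dd, Dd, dist_comm]; ring

private lemma Dd_pos {x y : E'} (hx : ‖x‖ < 1) (hy : ‖y‖ < 1) : 0 < Dd x y := by
  have h1 : (0:ℝ) < 1 - ‖x‖ ^ 2 := by nlinarith [norm_nonneg x]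
  have h2 : (0:ℝ) < 1 - ‖y‖ ^ 2 := by nlinarith [norm_nonneg y]
  have := sq_nonneg (dist x y)
  rw [Dd]; nlinarith

private lemma sqrtD_le {x y z : E'} (hx : ‖x‖ < 1) (hy : ‖y‖ < 1) (hz : ‖z‖ = 1) :
    Real.sqrt (Dd x y) ≤ 2 * max (dist x z) (dist y z) := by
  set M := max (dist x z) (dist y z) with hM
  have hM0 : 0 ≤ M := le_max_of_le_left dist_nonneg
  have key : Dd x y ≤ (2 * M) ^ 2 := by
    have hdx : dist x z ^ 2 = ‖x‖^2 - 2*⟪x,z⟫ + 1 := by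
      rw [dist_eq_norm, norm_sub_sq_real, hz]; ring
    have hdy : dist y z ^ 2 = ‖y‖^2 - 2*⟪y,z⟫ + 1 := by
      rw [dist_eq_norm, norm_sub_sq_real, hz]; ring
    have hsum : ⟪x,z⟫ + ⟪y,z⟫ = ⟪x+y,z⟫ := (inner_add_left x y z).symm
    have hCS : ⟪x+y,z⟫ ≤ ‖x+y‖ := by
      have := real_inner_le_norm (x+y) z; rwa [hz, mul_one] at this
    have hS2 : ‖x+y‖^2 = ‖x‖^2 + 2*⟪x,y⟫ + ‖y‖^2 := norm_add_sq_real x y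
    have hStri : ‖x+y‖ ≤ ‖x‖ + ‖y‖ := norm_add_le x y
    have h1 : dist x z ^2 ≤ M^2 :=
      pow_le_pow_left₀ dist_nonneg (le_max_left _ _) 2
    have h2 : dist y z ^2 ≤ M^2 :=
      pow_le_pow_left₀ dist_nonneg (le_max_right _ _) 2
    have hg : 0 ≤ 2*(1-‖x‖)^2 + 2*(1-‖y‖)^2 - (1-‖x‖*‖y‖)^2 := by
      nlinarith [sq_nonneg (‖x‖ - ‖y‖), norm_nonneg x, norm_nonneg y,
        mul_nonneg (mul_nonneg (sub_nonneg.mpr hx.le) (sub_nonneg.mpr hy.le))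
          (by nlinarith [norm_nonneg x, norm_nonneg y] : (0:ℝ) ≤ 3 - ‖x‖ - ‖y‖ - ‖x‖*‖y‖)]
    rw [Dd_eq]
    nlinarith [norm_nonneg (x+y), norm_nonneg x, norm_nonneg y,
      mul_nonneg (sub_nonneg.mpr hStri)
        (by nlinarith [norm_nonneg (x+y)] : (0:ℝ) ≤ 4 - ‖x+y‖ - (‖x‖+‖y‖))]
  calc Real.sqrt (Dd x y) ≤ Real.sqrt ((2*M)^2) := Real.sqrt_le_sqrt key
    _ = 2*M := Real.sqrt_sq (by linarith)

private lemma exists_unit_orth (y : E') : ∃ v : E', ‖v‖ = 1 ∧ ⟪y, v⟫ = 0 := by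
  set e0 : E' := EuclideanSpace.single (0 : Fin (n+2)) (1:ℝ) with he0
  set e1 : E' := EuclideanSpace.single (1 : Fin (n+2)) (1:ℝ) with he1
  by_cases h : y 0 = 0
  · exact ⟨e0, by simp [he0], by rw [he0, EuclideanSpace.inner_single_right]; simp [h]⟩
  · refine ⟨(Real.sqrt ((y 0)^2 + (y 1)^2))⁻¹ • ((y 0) • e1 - (y 1) • e0), ?_, ?_⟩
    · have hpos : 0 < Real.sqrt ((y 0)^2 + (y 1)^2) := by
        apply Real.sqrt_pos.mpr; positivity
      rw [norm_smul]
      have : ‖(y 0) • e1 - (y 1) • e0‖ = Real.sqrt ((y 0)^2 + (y 1)^2) := by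
        rw [← Real.sqrt_sq (norm_nonneg _)]
        congr 1
        rw [norm_sub_sq_real, norm_smul, norm_smul, real_inner_smul_left, real_inner_smul_right]
        have h01 : ⟪e1, e0⟫ = (0:ℝ) := by
          rw [he1, EuclideanSpace.inner_single_left]
          simp [he0, EuclideanSpace.single_apply]
        rw [h01]
        simp [he0, he1, Real.norm_eq_abs]
      rw [this, Real.norm_eq_abs, abs_of_nonneg (inv_nonneg.mpr hpos.le),
        inv_mul_cancel₀ hpos.ne']
    · rw [real_inner_smul_right, inner_sub_right, real_inner_smul_right, real_inner_smul_right]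
      have h0 : ⟪y, e0⟫ = y 0 := by rw [he0, EuclideanSpace.inner_single_right]; simp
      have h1 : ⟪y, e1⟫ = y 1 := by rw [he1, EuclideanSpace.inner_single_right]; simp
      rw [h0, h1]; ring

private lemma exists_good_z {x y : E'} (hx : ‖x‖ < 1) (hy : ‖y‖ < 1) (hpq : ‖x‖ ≤ ‖y‖) :
    ∃ z : E', ‖z‖ = 1 ∧ dist x z ^ 2 ≤ Dd x y ∧ dist y z ^ 2 ≤ Dd x y := by
  have hp0 : 0 ≤ ‖x‖ := norm_nonneg x
  have hq0 : 0 ≤ ‖y‖ := norm_nonneg y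
  have hiple : ⟪x, y⟫ ≤ ‖x‖ * ‖y‖ := real_inner_le_norm x y
  have hipge : -(‖x‖*‖y‖) ≤ ⟪x, y⟫ := neg_le_of_abs_le (abs_real_inner_le_norm x y)
  suffices h : ∃ z : E', ‖z‖ = 1 ∧
      ⟪x, y⟫ + ‖x‖^2*(1-‖y‖^2)/2 ≤ ⟪x, z⟫ ∧ ⟪x, y⟫ + ‖y‖^2*(1-‖x‖^2)/2 ≤ ⟪y, z⟫ by
    obtain ⟨z, hz1, hzx, hzy⟩ := h
    refine ⟨z, hz1, ?_, ?_⟩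
    · rw [Dd_eq, dist_eq_norm, norm_sub_sq_real, hz1]; nlinarith
    · rw [Dd_eq, dist_eq_norm, norm_sub_sq_real, hz1]; nlinarith
  by_cases hw : ‖y‖ • x + ‖x‖ • y = 0
  · by_cases hq' : ‖y‖ = 0
    · have hx0 : x = 0 := norm_eq_zero.mp (le_antisymm (hq' ▸ hpq) hp0)
      have hy0 : y = 0 := norm_eq_zero.mp hq'
      refine ⟨EuclideanSpace.single (0 : Fin (n+2)) (1:ℝ), by simp, ?_, ?_⟩ <;>
        simp [hx0, hy0]
    · have hqpos : 0 < ‖y‖ := lt_of_le_of_ne hq0 (Ne.symm hq')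
      obtain ⟨v, hv1, hvy⟩ := exists_unit_orth y
      set c : ℝ := ‖y‖*(1-‖x‖^2)/2 - ‖x‖ with hc
      have hc1 : c ≤ 1 := by
        rw [hc]; nlinarith [mul_nonneg hq0 (sq_nonneg ‖x‖)]
      have hc2 : -1 ≤ c := by
        rw [hc]; nlinarith [mul_nonneg hq0 (by nlinarith : (0:ℝ) ≤ 1 - ‖x‖^2)]
      have hsqc : Real.sqrt (1-c^2) ^ 2 = 1 - c^2 := Real.sq_sqrt (by nlinarith)
      set z : E' := (c/‖y‖) • y + Real.sqrt (1-c^2) • v with hz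
      have hyz : ⟪y, z⟫ = c * ‖y‖ := by
        rw [hz, inner_add_right, real_inner_smul_right, real_inner_smul_right,
          real_inner_self_eq_norm_sq, hvy]
        field_simp; ring
      have hsmul : ‖y‖ • x = -(‖x‖ • y) := eq_neg_of_add_eq_zero_left hw
      have hipeq : ⟪x, y⟫ = -(‖x‖*‖y‖) := by
        have h1 : (⟪‖y‖ • x, y⟫ : ℝ) = ⟪-(‖x‖ • y), y⟫ := by rw [hsmul]
        rw [real_inner_smul_left, inner_neg_left, real_inner_smul_left,
          real_inner_self_eq_norm_sq] at h1
        have h2 : ‖y‖ * ⟪x,y⟫ = ‖y‖ * (-(‖x‖*‖y‖)) := by rw [h1]; ring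
        exact mul_left_cancel₀ hq' h2
      have hxz : ⟪x, z⟫ = -(‖x‖*c) := by
        have h1 : (⟪‖y‖ • x, z⟫ : ℝ) = ⟪-(‖x‖ • y), z⟫ := by rw [hsmul]
        rw [real_inner_smul_left, inner_neg_left, real_inner_smul_left, hyz] at h1
        have h2 : ‖y‖ * (⟪x,z⟫:ℝ) = ‖y‖ * (-(‖x‖*c)) := by rw [h1]; ring
        exact mul_left_cancel₀ hq' h2
      have hzn : ‖z‖ = 1 := by
        have h3 : ‖z‖^2 = 1 := by
          rw [hz, norm_add_sq_real, real_inner_smul_left, real_inner_smul_right, hvy,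
            norm_smul, norm_smul, hv1, Real.norm_eq_abs, Real.norm_eq_abs,
            mul_one, mul_pow, sq_abs, sq_abs, hsqc]
          rw [mul_zero, mul_zero, mul_zero, add_zero, div_pow,
            div_mul_cancel₀ _ (pow_ne_zero 2 hq')]
          ring
        calc ‖z‖ = Real.sqrt (‖z‖^2) := (Real.sqrt_sq (norm_nonneg z)).symm
          _ = 1 := by rw [h3, Real.sqrt_one]
      refine ⟨z, hzn, ?_, ?_⟩
      · rw [hxz, hipeq]
        nlinarith [mul_nonneg hp0 hq0, mul_nonneg (mul_nonneg hp0 hq0) (sq_nonneg ‖x‖),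
          sq_nonneg ‖x‖, mul_nonneg (mul_nonneg (mul_nonneg hp0 hp0) hq0) hq0]
      · rw [hyz, hipeq, hc]; ring_nf; nlinarith [sq_nonneg ‖x‖]
  · have hwne : (‖y‖ • x + ‖x‖ • y) ≠ 0 := hw
    set w : E' := ‖y‖ • x + ‖x‖ • y with hwdef
    have hW : 0 < (‖w‖:ℝ)^2 := pow_pos (norm_pos_iff.mpr hwne) 2
    have hcomm : (⟪y, x⟫:ℝ) = ⟪x, y⟫ := real_inner_comm x y
    set z₀ : E' := ((1-‖y‖^2)/2) • x + y with hz0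
    have hz0x : ⟪x, z₀⟫ = (1-‖y‖^2)/2 * ‖x‖^2 + ⟪x,y⟫ := by
      rw [hz0, inner_add_right, real_inner_smul_right, real_inner_self_eq_norm_sq]
    have hz0y : ⟪y, z₀⟫ = (1-‖y‖^2)/2 * ⟪x,y⟫ + ‖y‖^2 := by
      rw [hz0, inner_add_right, real_inner_smul_right, real_inner_self_eq_norm_sq, hcomm]
    have hz0n : ‖z₀‖ ≤ 1 := by
      calc ‖z₀‖ ≤ ‖((1-‖y‖^2)/2) • x‖ + ‖y‖ := norm_add_le _ _
        _ = |(1-‖y‖^2)/2| * ‖x‖ + ‖y‖ := by rw [norm_smul, Real.norm_eq_abs]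
        _ = (1-‖y‖^2)/2 * ‖x‖ + ‖y‖ := by rw [abs_of_nonneg (by nlinarith)]
        _ ≤ 1 := by
            nlinarith [sq_nonneg (1-‖y‖),
              mul_nonneg (by nlinarith : (0:ℝ) ≤ 1-‖y‖^2) (by linarith : (0:ℝ) ≤ 1-‖x‖)]
    have hxw : (0:ℝ) ≤ ⟪x, w⟫ := by
      rw [hwdef, inner_add_right, real_inner_smul_right, real_inner_smul_right,
        real_inner_self_eq_norm_sq]
      nlinarith
    have hyw : (0:ℝ) ≤ ⟪y, w⟫ := by
      rw [hwdef, inner_add_right, real_inner_smul_right, real_inner_smul_right,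
        real_inner_self_eq_norm_sq, hcomm]
      nlinarith
    have hz0sq : 0 ≤ 1 - ‖z₀‖^2 := by nlinarith [norm_nonneg z₀]
    set b : ℝ := ⟪z₀, w⟫ with hb
    set r : ℝ := Real.sqrt (b^2 + ‖w‖^2 * (1 - ‖z₀‖^2)) with hr
    have harg : 0 ≤ b^2 + ‖w‖^2 * (1 - ‖z₀‖^2) := by positivity
    have hr2 : r^2 = b^2 + ‖w‖^2 * (1 - ‖z₀‖^2) := Real.sq_sqrt harg
    have hrb : b ≤ r := by
      have h1 : Real.sqrt (b^2) ≤ r :=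
        Real.sqrt_le_sqrt (by nlinarith [mul_nonneg (sq_nonneg ‖w‖) hz0sq])
      rw [Real.sqrt_sq_eq_abs] at h1
      exact (le_abs_self b).trans h1
    set s : ℝ := (r - b)/‖w‖^2 with hs
    have hs0 : 0 ≤ s := div_nonneg (by linarith) hW.le
    have hsW : s * ‖w‖^2 = r - b := by rw [hs]; field_simp
    set z : E' := z₀ + s • w with hz
    have hzsq : ‖z‖^2 = ‖z₀‖^2 + 2*(s*b) + s^2*‖w‖^2 := by
      rw [hz, norm_add_sq_real, real_inner_smul_right, norm_smul, Real.norm_eq_abs,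
        abs_of_nonneg hs0, mul_pow, ← hb]
    have hzn : ‖z‖ = 1 := by
      have key : ‖w‖^2 * ‖z‖^2 = ‖w‖^2 * 1 := by
        calc ‖w‖^2 * ‖z‖^2 = ‖w‖^2*‖z₀‖^2 + 2*(s*‖w‖^2)*b + (s*‖w‖^2)^2 := by
              rw [hzsq]; ring
          _ = ‖w‖^2*‖z₀‖^2 + 2*(r-b)*b + (r-b)^2 := by rw [hsW]
          _ = ‖w‖^2*‖z₀‖^2 + (r^2 - b^2) := by ring
          _ = ‖w‖^2 * 1 := by rw [hr2]; ring
      have h3 : ‖z‖^2 = 1 := mul_left_cancel₀ hW.ne' key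
      calc ‖z‖ = Real.sqrt (‖z‖^2) := (Real.sqrt_sq (norm_nonneg z)).symm
        _ = 1 := by rw [h3, Real.sqrt_one]
    have hzx : (⟪x, z⟫:ℝ) = ⟪x,z₀⟫ + s * ⟪x,w⟫ := by
      rw [hz, inner_add_right, real_inner_smul_right]
    have hzy : (⟪y, z⟫:ℝ) = ⟪y,z₀⟫ + s * ⟪y,w⟫ := by
      rw [hz, inner_add_right, real_inner_smul_right]
    refine ⟨z, hzn, ?_, ?_⟩
    · rw [hzx, hz0x]
      nlinarith [mul_nonneg hs0 hxw]
    · rw [hzy, hz0y]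
      nlinarith [mul_nonneg hs0 hyw,
        mul_nonneg (mul_nonneg hq0 (sub_nonneg.mpr hpq))
          (by nlinarith : (0:ℝ) ≤ 1 - ‖x‖*‖y‖)]

private lemma mset_nonempty (x y : E') :
    ((fun z => max (dist x z) (dist y z)) '' sphere (0:E') 1).Nonempty :=
  ⟨_, ⟨EuclideanSpace.single (0 : Fin (n+2)) (1:ℝ),
    mem_sphere_zero_iff_norm.mpr (by simp), rfl⟩⟩

private lemma mset_bdd (x y : E') :
    BddBelow ((fun z => max (dist x z) (dist y z)) '' sphere (0:E') 1) := by
  refine ⟨0, ?_⟩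
  rintro b ⟨z, hz, rfl⟩
  exact le_max_of_le_left dist_nonneg

private lemma m_ge {x y : E'} (hx : ‖x‖ < 1) (hy : ‖y‖ < 1) :
    Real.sqrt (Dd x y) / 2 ≤
      sInf ((fun z => max (dist x z) (dist y z)) '' sphere (0:E') 1) := by
  refine le_csInf (mset_nonempty x y) ?_
  rintro b ⟨z, hz, rfl⟩
  have := sqrtD_le hx hy (mem_sphere_zero_iff_norm.mp hz)
  linarith

private lemma m_le {x y : E'} (hx : ‖x‖ < 1) (hy : ‖y‖ < 1) :
    sInf ((fun z => max (dist x z) (dist y z)) '' sphere (0:E') 1) ≤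
      Real.sqrt (Dd x y) := by
  have key : ∃ z : E', ‖z‖ = 1 ∧ dist x z ^ 2 ≤ Dd x y ∧ dist y z ^ 2 ≤ Dd x y := by
    rcases le_total ‖x‖ ‖y‖ with h | h
    · exact exists_good_z hx hy h
    · obtain ⟨z, hz1, h1, h2⟩ := exists_good_z hy hx h
      rw [← Dd_comm] at h1 h2
      exact ⟨z, hz1, h2, h1⟩
  obtain ⟨z, hz1, h1, h2⟩ := key
  have hd1 : dist x z ≤ Real.sqrt (Dd x y) := by
    calc dist x z = Real.sqrt (dist x z ^ 2) := (Real.sqrt_sq dist_nonneg).symm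
      _ ≤ _ := Real.sqrt_le_sqrt h1
  have hd2 : dist y z ≤ Real.sqrt (Dd x y) := by
    calc dist y z = Real.sqrt (dist y z ^ 2) := (Real.sqrt_sq dist_nonneg).symm
      _ ≤ _ := Real.sqrt_le_sqrt h2
  calc sInf _ ≤ max (dist x z) (dist y z) :=
        csInf_le (mset_bdd x y) ⟨z, mem_sphere_zero_iff_norm.mpr hz1, rfl⟩
    _ ≤ Real.sqrt (Dd x y) := max_le hd1 hd2

private lemma main_ineq {x y : E'} (hx : ‖x‖ < 1) (hy : ‖y‖ < 1) :
    thRhoB x y ≤ ctildeB x y ∧ ctildeB x y ≤ 2 * thRhoB x y := by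
  have hth : thRhoB x y = dist x y / Real.sqrt (Dd x y) := rfl
  have hct : ctildeB x y =
      dist x y / sInf ((fun z => max (dist x z) (dist y z)) '' sphere (0:E') 1) := rfl
  set m := sInf ((fun z => max (dist x z) (dist y z)) '' sphere (0:E') 1) with hm
  have hsq : 0 < Real.sqrt (Dd x y) := Real.sqrt_pos.mpr (Dd_pos hx hy)
  have h1 : Real.sqrt (Dd x y) / 2 ≤ m := m_ge hx hy
  have h2 : m ≤ Real.sqrt (Dd x y) := m_le hx hy
  have hmpos : 0 < m := lt_of_lt_of_le (by positivity) h1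
  constructor
  · rw [hth, hct]
    exact div_le_div_of_nonneg_left dist_nonneg hmpos h2
  · rw [hth, hct]
    have : 2 * (dist x y / Real.sqrt (Dd x y)) = dist x y / (Real.sqrt (Dd x y) / 2) := by
      field_simp
    rw [this]
    exact div_le_div_of_nonneg_left dist_nonneg (by positivity) h1

private lemma sharp1 {c : ℝ}
    (H : ∀ x y : E', x ∈ ball (0:E') 1 → y ∈ ball (0:E') 1 →
      c * thRhoB x y ≤ ctildeB x y) : c ≤ 1 := by
  by_contra hcon
  push_neg at hcon
  set t : ℝ := min (1/2) (c-1) with htdef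
  have ht0 : 0 < t := lt_min (by norm_num) (by linarith)
  have ht1 : t < 1 := lt_of_le_of_lt (min_le_left _ _) (by norm_num)
  have htc : 1 + t ≤ c := by
    have := min_le_right (1/2 : ℝ) (c-1); simp only [htdef]; linarith
  set e0 : E' := EuclideanSpace.single (0 : Fin (n+2)) (1:ℝ) with he0
  have he0n : ‖e0‖ = 1 := by simp [he0]
  set x : E' := t • e0 with hxdef
  set y : E' := (-t) • e0 with hydef
  have hxn : ‖x‖ = t := by
    rw [hxdef, norm_smul, he0n, mul_one, Real.norm_eq_abs, abs_of_pos ht0]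
  have hyn : ‖y‖ = t := by
    rw [hydef, norm_smul, he0n, mul_one, Real.norm_eq_abs, abs_neg, abs_of_pos ht0]
  have hxb : x ∈ ball (0:E') 1 := mem_ball_zero_iff.mpr (by rw [hxn]; exact ht1)
  have hyb : y ∈ ball (0:E') 1 := mem_ball_zero_iff.mpr (by rw [hyn]; exact ht1)
  have hxy0 : x + y = 0 := by
    rw [hxdef, hydef, ← add_smul, add_neg_cancel, zero_smul]
  have hdist : dist x y = 2*t := by
    rw [dist_eq_norm, hxdef, hydef, ← sub_smul, norm_smul, he0n, mul_one,
      Real.norm_eq_abs, sub_neg_eq_add, abs_of_pos (by linarith)]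
    ring
  have hu : (0:ℝ) < 1 + t^2 := by positivity
  have hth : thRhoB x y = 2*t/(1+t^2) := by
    rw [thRhoB, hdist, hxn, hyn]
    rw [show (2*t)^2 + (1-t^2)*(1-t^2) = (1+t^2)^2 by ring, Real.sqrt_sq (by positivity)]
  have hmge : Real.sqrt (1+t^2) ≤
      sInf ((fun z => max (dist x z) (dist y z)) '' sphere (0:E') 1) := by
    refine le_csInf (mset_nonempty x y) ?_
    rintro b ⟨z, hzm, rfl⟩
    have hz : ‖z‖ = 1 := mem_sphere_zero_iff_norm.mp hzm
    have hdx : dist x z ^2 = t^2 - 2*⟪x,z⟫ + 1 := by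
      rw [dist_eq_norm, norm_sub_sq_real, hz, hxn]; ring
    have hdy : dist y z ^2 = t^2 - 2*⟪y,z⟫ + 1 := by
      rw [dist_eq_norm, norm_sub_sq_real, hz, hyn]; ring
    have hsum : (⟪x,z⟫:ℝ) + ⟪y,z⟫ = 0 := by
      rw [← inner_add_left, hxy0, inner_zero_left]
    have h1 : dist x z ^ 2 ≤ (max (dist x z) (dist y z))^2 :=
      pow_le_pow_left₀ dist_nonneg (le_max_left _ _) 2
    have h2 : dist y z ^ 2 ≤ (max (dist x z) (dist y z))^2 :=
      pow_le_pow_left₀ dist_nonneg (le_max_right _ _) 2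
    have hmax : 1 + t^2 ≤ (max (dist x z) (dist y z))^2 := by linarith
    calc Real.sqrt (1+t^2) ≤ Real.sqrt ((max (dist x z) (dist y z))^2) :=
          Real.sqrt_le_sqrt hmax
      _ = _ := Real.sqrt_sq (le_max_of_le_left dist_nonneg)
  have hsq1 : 0 < Real.sqrt (1+t^2) := Real.sqrt_pos.mpr hu
  have hct : ctildeB x y ≤ 2*t/Real.sqrt (1+t^2) := by
    have hctval : ctildeB x y = dist x y /
        sInf ((fun z => max (dist x z) (dist y z)) '' sphere (0:E') 1) := rfl
    rw [hctval, hdist]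
    exact div_le_div_of_nonneg_left (by linarith) hsq1 hmge
  have hH := H x y hxb hyb
  rw [hth] at hH
  have hfin : c * (2*t/(1+t^2)) ≤ 2*t/Real.sqrt (1+t^2) := le_trans hH hct
  rw [← mul_div_assoc] at hfin
  have hcross : c * (2*t) * Real.sqrt (1+t^2) ≤ 2*t*(1+t^2) :=
    (div_le_div_iff₀ hu hsq1).mp hfin
  have hss : Real.sqrt (1+t^2) * Real.sqrt (1+t^2) = 1+t^2 := Real.mul_self_sqrt hu.le
  have h5 : c * Real.sqrt (1+t^2) ≤ 1+t^2 := by nlinarith [hcross, ht0]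
  have h6 : c ≤ Real.sqrt (1+t^2) := by nlinarith [h5, hss, hsq1]
  have h7 : c^2 ≤ 1+t^2 := by nlinarith [h6, hss, hcon]
  nlinarith [htc, ht0, h7]

private lemma sharp2 {c : ℝ}
    (H : ∀ x y : E', x ∈ ball (0:E') 1 → y ∈ ball (0:E') 1 →
      ctildeB x y ≤ c * thRhoB x y) : 2 ≤ c := by
  by_contra hcon
  push_neg at hcon
  set δ : ℝ := min (1/2) ((2-c)/4) with hδdef
  have hδ0 : 0 < δ := lt_min (by norm_num) (by linarith)
  have hδh : δ ≤ 1/2 := min_le_left _ _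
  have hδc : 4*δ ≤ 2 - c := by
    have := min_le_right (1/2 : ℝ) ((2-c)/4); simp only [hδdef]; linarith
  set e0 : E' := EuclideanSpace.single (0 : Fin (n+2)) (1:ℝ) with he0
  have he0n : ‖e0‖ = 1 := by simp [he0]
  set s : ℝ := 1 - δ - δ^2 with hsdef
  set t : ℝ := 1 - δ with htdef
  have hs0 : 0 < s := by rw [hsdef]; nlinarith
  have hs1 : s < 1 := by rw [hsdef]; nlinarith
  have hst : s < t := by rw [hsdef, htdef]; nlinarith
  have ht1 : t < 1 := by rw [htdef]; linarith
  set x : E' := s • e0 with hxdef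
  set y : E' := t • e0 with hydef
  have hxn : ‖x‖ = s := by
    rw [hxdef, norm_smul, he0n, mul_one, Real.norm_eq_abs, abs_of_pos hs0]
  have hyn : ‖y‖ = t := by
    rw [hydef, norm_smul, he0n, mul_one, Real.norm_eq_abs, abs_of_pos (by linarith)]
  have hxb : x ∈ ball (0:E') 1 := mem_ball_zero_iff.mpr (by rw [hxn]; exact hs1)
  have hyb : y ∈ ball (0:E') 1 := mem_ball_zero_iff.mpr (by rw [hyn]; exact ht1)
  have hdist : dist x y = δ^2 := by
    rw [dist_eq_norm, hxdef, hydef, ← sub_smul, norm_smul, he0n, mul_one,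
      Real.norm_eq_abs, show s - t = -(δ^2) by rw [hsdef, htdef]; ring, abs_neg,
      abs_of_pos (by positivity)]
  have hmge : 1 - s ≤
      sInf ((fun z => max (dist x z) (dist y z)) '' sphere (0:E') 1) := by
    refine le_csInf (mset_nonempty x y) ?_
    rintro b ⟨z, hzm, rfl⟩
    have hz : ‖z‖ = 1 := mem_sphere_zero_iff_norm.mp hzm
    have h1 : ‖z‖ - ‖x‖ ≤ ‖z - x‖ := norm_sub_norm_le z x
    rw [hz, hxn, norm_sub_rev] at h1
    rw [← dist_eq_norm] at h1
    exact le_max_of_le_left h1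
  have hmle : sInf ((fun z => max (dist x z) (dist y z)) '' sphere (0:E') 1) ≤ 1 - s := by
    have hde : dist x e0 = 1 - s := by
      rw [dist_eq_norm, hxdef, show s • e0 - e0 = (s-1) • e0 by module,
        norm_smul, he0n, mul_one, Real.norm_eq_abs, abs_of_neg (by linarith)]
      ring
    have hde' : dist y e0 = 1 - t := by
      rw [dist_eq_norm, hydef, show t • e0 - e0 = (t-1) • e0 by module,
        norm_smul, he0n, mul_one, Real.norm_eq_abs, abs_of_neg (by linarith)]
      ring
    have hmem : (1-s) ∈ ((fun z => max (dist x z) (dist y z)) '' sphere (0:E') 1) := by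
      refine ⟨e0, mem_sphere_zero_iff_norm.mpr he0n, ?_⟩
      simp only [hde, hde']
      exact max_eq_left (by linarith)
    exact csInf_le (mset_bdd x y) hmem
  have h1s : 1 - s = δ*(1+δ) := by rw [hsdef]; ring
  have hA : (0:ℝ) < δ*(1+δ) := by positivity
  have hB : (0:ℝ) < δ*(2-δ^2) := by nlinarith
  have hctl : δ^2/(1-s) ≤ ctildeB x y := by
    have hctval : ctildeB x y = dist x y /
        sInf ((fun z => max (dist x z) (dist y z)) '' sphere (0:E') 1) := rfl
    rw [hctval, hdist]
    refine div_le_div_of_nonneg_left (sq_nonneg δ) ?_ hmle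
    calc (0:ℝ) < 1 - s := by rw [h1s]; exact hA
      _ ≤ _ := hmge
  have hth : thRhoB x y = δ^2/(δ*(2-δ^2)) := by
    rw [thRhoB, hdist, hxn, hyn]
    rw [show (δ^2)^2 + (1-s^2)*(1-t^2) = (δ*(2-δ^2))^2 by rw [hsdef, htdef]; ring,
      Real.sqrt_sq (by nlinarith)]
  have hHc := H x y hxb hyb
  rw [hth] at hHc
  have hkey : δ^2/(δ*(1+δ)) ≤ c*δ^2/(δ*(2-δ^2)) := by
    rw [← h1s, ← mul_div_assoc] at *
    exact le_trans hctl hHc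
  have hcross : δ^2*(δ*(2-δ^2)) ≤ c*δ^2*(δ*(1+δ)) := (div_le_div_iff₀ hA hB).mp hkey
  have hδ3 : (0:ℝ) < δ^3 := by positivity
  have h2 : δ^3 * (2-δ^2) ≤ δ^3 * (c*(1+δ)) := by nlinarith [hcross]
  have h3 : 2-δ^2 ≤ c*(1+δ) := le_of_mul_le_mul_left h2 hδ3
  nlinarith [h3, hδ0, hδc]

end AuxCtilde

/-- For all `x, y ∈ 𝔹ⁿ`: `th(ρ_{𝔹ⁿ}(x,y)/2) ≤ c̃_{𝔹ⁿ}(x,y) ≤ 2 th(ρ_{𝔹ⁿ}(x,y)/2)`,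
and the constants `1` and `2` are best possible. -/
theorem stmt_12 {n : ℕ} :
    (∀ x y : EuclideanSpace ℝ (Fin (n + 2)),
      x ∈ ball (0 : EuclideanSpace ℝ (Fin (n + 2))) 1 →
      y ∈ ball (0 : EuclideanSpace ℝ (Fin (n + 2))) 1 →
      thRhoB x y ≤ ctildeB x y ∧ ctildeB x y ≤ 2 * thRhoB x y) ∧
    (∀ c : ℝ, (∀ x y : EuclideanSpace ℝ (Fin (n + 2)),
      x ∈ ball (0 : EuclideanSpace ℝ (Fin (n + 2))) 1 →
      y ∈ ball (0 : EuclideanSpace ℝ (Fin (n + 2))) 1 →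
      c * thRhoB x y ≤ ctildeB x y) → c ≤ 1) ∧
    (∀ c : ℝ, (∀ x y : EuclideanSpace ℝ (Fin (n + 2)),
      x ∈ ball (0 : EuclideanSpace ℝ (Fin (n + 2))) 1 →
      y ∈ ball (0 : EuclideanSpace ℝ (Fin (n + 2))) 1 →
      ctildeB x y ≤ c * thRhoB x y) → 2 ≤ c) := by
  refine ⟨?_, ?_, ?_⟩
  · exact fun x y hx hy =>
      main_ineq (mem_ball_zero_iff.mp hx) (mem_ball_zero_iff.mp hy)
  · exact fun c h => sharp1 h
  · exact fun c h => sharp2 h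
end

section
/- For 0 < u < v < 1 and the points x = u·e₁, y = v·e₁ of the unit ball 𝔹ⁿ, one has c̃_{𝔹ⁿ}(x,y) = ((1−uv)/(1−u))·th(ρ_{𝔹ⁿ}(x,y)/2); explicitly, c̃_{𝔹ⁿ}(x,y) = (v−u)/(1−u) and th(ρ_{𝔹ⁿ}(x,y)/2) = (v−u)/(1−uv). As v → u⁺ the ratio (1−uv)/(1−u) tends to 1+u, which approaches 1 as u → 0⁺ and 2 as u → 1⁻; hence the constants 1 and 2 in the inequality th(ρ_{𝔹ⁿ}/2) ≤ c̃_{𝔹ⁿ} ≤ 2·th(ρ_{𝔹ⁿ}/2) are best possible. -/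
open Metric Set Filter

/-!
On the diameter through `x = u e₁` and `y = v e₁`, every boundary point `z` satisfies
`|x - z| ≥ 1 - |x| = 1 - u`, with equality at `z = e₁`, which is also the nearer boundary point
for `y`; hence the infimum in `c̃` equals `1 - u`. For `th(ρ/2)` the quantity under the root is
the perfect square `(v - u)² + (1 - u²)(1 - v²) = (1 - uv)²`.
-/

lemma one_sub_norm_le_dist_of_mem_sphere {E : Type*} [SeminormedAddCommGroup E] (x : E) {z : E}
    (hz : z ∈ sphere (0 : E) 1) :
    1 - ‖x‖ ≤ dist x z := by
  rw [mem_sphere_zero_iff_norm] at hz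
  rw [dist_comm, dist_eq_norm]
  linarith [norm_sub_norm_le z x]

section UnitVector

variable {E : Type*} [NormedAddCommGroup E] [NormedSpace ℝ E] {e : E}

lemma dist_smul_smul_of_norm_eq_one (he : ‖e‖ = 1) (a b : ℝ) :
    dist (a • e) (b • e) = |a - b| := by
  rw [dist_eq_norm, ← sub_smul, norm_smul, he, mul_one, Real.norm_eq_abs]

lemma norm_smul_of_norm_eq_one (he : ‖e‖ = 1) (a : ℝ) : ‖a • e‖ = |a| := by
  rw [norm_smul, he, mul_one, Real.norm_eq_abs]

lemma sInf_max_dist_sphere_smul (he : ‖e‖ = 1) {u v : ℝ} (hu : 0 ≤ u) (huv : u ≤ v)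
    (hv : v ≤ 1) :
    sInf ((fun z => max (dist (u • e) z) (dist (v • e) z)) '' sphere (0 : E) 1) = 1 - u := by
  refine IsLeast.csInf_eq ⟨⟨e, by simpa using he, ?_⟩, ?_⟩
  · have hdist : ∀ a : ℝ, a ≤ 1 → dist (a • e) e = 1 - a := fun a ha => by
      simpa [abs_of_nonpos (sub_nonpos.2 ha)] using dist_smul_smul_of_norm_eq_one he a 1
    simp only [hdist u (huv.trans hv), hdist v hv]
    exact max_eq_left (by linarith)
  · rintro _ ⟨z, hz, rfl⟩
    have h := one_sub_norm_le_dist_of_mem_sphere (u • e) hz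
    rw [norm_smul_of_norm_eq_one he, abs_of_nonneg hu] at h
    exact h.trans (le_max_left _ _)

end UnitVector

section Collinear

variable {n : ℕ} {e : EuclideanSpace ℝ (Fin (n + 2))}

lemma ctildeB_smul_smul (he : ‖e‖ = 1) {u v : ℝ} (hu : 0 ≤ u) (huv : u ≤ v) (hv : v ≤ 1) :
    ctildeB (u • e) (v • e) = (v - u) / (1 - u) := by
  rw [ctildeB, sInf_max_dist_sphere_smul he hu huv hv, dist_smul_smul_of_norm_eq_one he,
    abs_sub_comm, abs_of_nonneg (by linarith)]

lemma thRhoB_smul_smul (he : ‖e‖ = 1) (u v : ℝ) :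
    thRhoB (u • e) (v • e) = |v - u| / |1 - u * v| := by
  have hsq : |u - v| ^ 2 + (1 - |u| ^ 2) * (1 - |v| ^ 2) = (1 - u * v) ^ 2 := by
    simp only [sq_abs]
    ring
  rw [thRhoB, norm_smul_of_norm_eq_one he, norm_smul_of_norm_eq_one he,
    dist_smul_smul_of_norm_eq_one he, hsq, Real.sqrt_sq_eq_abs, abs_sub_comm]

end Collinear

/-- For `0 < u < v < 1`, `x = u e₁`, `y = v e₁` in `𝔹ⁿ`:
`c̃_{𝔹ⁿ}(x,y) = (v−u)/(1−u)`, `th(ρ_{𝔹ⁿ}(x,y)/2) = (v−u)/(1−uv)`, so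
`c̃_{𝔹ⁿ}(x,y) = ((1−uv)/(1−u))·th(ρ_{𝔹ⁿ}(x,y)/2)`; the ratio `(1−uv)/(1−u)`
tends to `1+u` as `v → u⁺`, which tends to `1` as `u → 0⁺` and to `2` as `u → 1⁻`,
so the constants `1` and `2` in `th(ρ/2) ≤ c̃ ≤ 2 th(ρ/2)` are best possible. -/
theorem stmt_13 {n : ℕ} (u v : ℝ) (hu : 0 < u) (huv : u < v) (hv : v < 1)
    (e₁ : EuclideanSpace ℝ (Fin (n + 2))) (he₁ : e₁ = EuclideanSpace.single 0 1)
    (x y : EuclideanSpace ℝ (Fin (n + 2))) (hx : x = u • e₁) (hy : y = v • e₁) :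
    ctildeB x y = (v - u) / (1 - u) ∧
    thRhoB x y = (v - u) / (1 - u * v) ∧
    ctildeB x y = ((1 - u * v) / (1 - u)) * thRhoB x y ∧
    Tendsto (fun w : ℝ => (1 - u * w) / (1 - u)) (nhdsWithin u (Ioi u)) (nhds (1 + u)) ∧
    Tendsto (fun t : ℝ => 1 + t) (nhdsWithin 0 (Ioi 0)) (nhds 1) ∧
    Tendsto (fun t : ℝ => 1 + t) (nhdsWithin 1 (Iio 1)) (nhds 2) := by
  have he : ‖e₁‖ = 1 := by simp [he₁]
  have hu₁ : 1 - u ≠ 0 := by linarith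
  have huv₁ : 0 < 1 - u * v := by nlinarith
  have hc : ctildeB x y = (v - u) / (1 - u) := by
    rw [hx, hy, ctildeB_smul_smul he hu.le huv.le hv.le]
  have ht : thRhoB x y = (v - u) / (1 - u * v) := by
    rw [hx, hy, thRhoB_smul_smul he, abs_of_pos (by linarith), abs_of_pos huv₁]
  refine ⟨hc, ht, ?_, ?_, ?_, ?_⟩
  · rw [hc, ht, div_mul_div_comm, mul_comm (1 - u * v), mul_div_mul_right _ _ huv₁.ne']
  · refine (Continuous.tendsto' (by fun_prop) u _ ?_).mono_left nhdsWithin_le_nhds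
    field_simp
    ring
  · exact (Continuous.tendsto' (by fun_prop) 0 _ (by norm_num)).mono_left nhdsWithin_le_nhds
  · exact (Continuous.tendsto' (by fun_prop) 1 _ (by norm_num)).mono_left nhdsWithin_le_nhds
end

section
/- For every point x of the upper half-space ℍⁿ and every 0 < r < 1, the ball inclusions B_ρ(x, log((2+r)/(2−r))) ⊆ B_c̃(x, r) ⊆ B_ρ(x, log((1+r)/(1−r))) hold; equivalently, {y ∈ ℍⁿ : |x−y|/√(|x−y|² + 4·xₙ·yₙ) < r/2} ⊆ {y ∈ ℍⁿ : c̃_{ℍⁿ}(x,y) < r} ⊆ {y ∈ ℍⁿ : |x−y|/√(|x−y|² + 4·xₙ·yₙ) < r}. -/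
open Metric Set

/-!
Let `x*` be the reflection of `x` in `∂ℍⁿ`, so that `|x* − y| = √(|x−y|² + 4 xₙ yₙ)` and
`th(ρ(x,y)/2) = |x−y| / |x* − y|`. Writing `m` for the infimum in the definition of `c̃`, both
inclusions follow from `|x* − y| / 2 ≤ m ≤ |x* − y|`, i.e. `th(ρ/2) ≤ c̃ ≤ 2 th(ρ/2)`.
For `z ∈ ∂ℍⁿ` we have `|x − z| = |x* − z|`, so the triangle inequality through `z` gives the
lower bound; the upper bound is witnessed by the foot `z` of the perpendicular from `x` to `∂ℍⁿ`.
-/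

open Function

theorem EuclideanSpace.dist_update_sq_s14 {ι : Type*} [Fintype ι] [DecidableEq ι]
    (x y : EuclideanSpace ℝ ι) (i : ι) (t : ℝ) :
    dist (WithLp.toLp 2 (update (WithLp.ofLp x) i t)) y ^ 2
      = dist x y ^ 2 - (x i - y i) ^ 2 + (t - y i) ^ 2 := by
  simp only [EuclideanSpace.dist_eq, Real.sq_sqrt (Finset.sum_nonneg fun _ _ => sq_nonneg _),
    Real.dist_eq, sq_abs]
  rw [Fintype.sum_eq_add_sum_compl i, Fintype.sum_eq_add_sum_compl i (fun j => (x j - y j) ^ 2)]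
  have hrest : ∑ j ∈ {i}ᶜ, (update (WithLp.ofLp x) i t j - y j) ^ 2
      = ∑ j ∈ {i}ᶜ, (x j - y j) ^ 2 :=
    Finset.sum_congr rfl fun j hj => by rw [update_of_ne (by simpa using hj)]
  simp only [update_self, hrest]
  ring

namespace UpperHalfSpace

variable {n : ℕ}

def setLast (x : EuclideanSpace ℝ (Fin (n + 1))) (t : ℝ) : EuclideanSpace ℝ (Fin (n + 1)) :=
  WithLp.toLp 2 (update (WithLp.ofLp x) (Fin.last n) t)

theorem dist_setLast_sq (x y : EuclideanSpace ℝ (Fin (n + 1))) (t : ℝ) :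
    dist (setLast x t) y ^ 2
      = dist x y ^ 2 - (x (Fin.last n) - y (Fin.last n)) ^ 2 + (t - y (Fin.last n)) ^ 2 :=
  EuclideanSpace.dist_update_sq_s14 x y _ t

theorem sq_sub_last_le_dist_sq (x y : EuclideanSpace ℝ (Fin (n + 1))) :
    (x (Fin.last n) - y (Fin.last n)) ^ 2 ≤ dist x y ^ 2 := by
  have h := dist_setLast_sq x y (y (Fin.last n))
  nlinarith [sq_nonneg (dist (setLast x (y (Fin.last n))) y)]

theorem setLast_mem_bdry (x : EuclideanSpace ℝ (Fin (n + 1))) :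
    setLast x 0 ∈ upperHalfSpaceBdry n := by
  simp [setLast, upperHalfSpaceBdry]

def reflect (x : EuclideanSpace ℝ (Fin (n + 1))) : EuclideanSpace ℝ (Fin (n + 1)) :=
  setLast x (-x (Fin.last n))

theorem dist_reflect_sq (x y : EuclideanSpace ℝ (Fin (n + 1))) :
    dist (reflect x) y ^ 2 = dist x y ^ 2 + 4 * x (Fin.last n) * y (Fin.last n) := by
  rw [reflect, dist_setLast_sq]
  ring

theorem dist_reflect_of_mem_bdry (x : EuclideanSpace ℝ (Fin (n + 1)))
    {z : EuclideanSpace ℝ (Fin (n + 1))} (hz : z ∈ upperHalfSpaceBdry n) :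
    dist (reflect x) z = dist x z := by
  have hz : z (Fin.last n) = 0 := hz
  have h := dist_reflect_sq x z
  rw [hz, mul_zero, add_zero] at h
  exact (sq_eq_sq₀ dist_nonneg dist_nonneg).1 h

theorem dist_reflect_pos {x y : EuclideanSpace ℝ (Fin (n + 1))} (hx : x ∈ upperHalfSpace n)
    (hy : y ∈ upperHalfSpace n) : 0 < dist (reflect x) y := by
  have hx : 0 < x (Fin.last n) := hx
  have hy : 0 < y (Fin.last n) := hy
  exact dist_nonneg.lt_of_ne' (sq_pos_iff.1 (by rw [dist_reflect_sq]; positivity))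

theorem thRhoH_eq (x y : EuclideanSpace ℝ (Fin (n + 1))) :
    thRhoH x y = dist x y / dist (reflect x) y := by
  rw [thRhoH, ← dist_reflect_sq, Real.sqrt_sq dist_nonneg]

noncomputable def bdryMaxDist (x y : EuclideanSpace ℝ (Fin (n + 1))) : ℝ :=
  sInf ((fun z => max (dist x z) (dist y z)) '' upperHalfSpaceBdry n)

theorem ctildeH_eq (x y : EuclideanSpace ℝ (Fin (n + 1))) :
    ctildeH x y = dist x y / bdryMaxDist x y :=
  rfl

theorem dist_reflect_div_two_le_bdryMaxDist (x y : EuclideanSpace ℝ (Fin (n + 1))) :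
    dist (reflect x) y / 2 ≤ bdryMaxDist x y := by
  refine le_csInf ⟨_, mem_image_of_mem _ (setLast_mem_bdry x)⟩ ?_
  rintro _ ⟨z, hz, rfl⟩
  have htri := dist_triangle_right (reflect x) y z
  rw [dist_reflect_of_mem_bdry x hz] at htri
  have := le_max_left (dist x z) (dist y z)
  have := le_max_right (dist x z) (dist y z)
  linarith

theorem bdryMaxDist_le_dist_reflect {x y : EuclideanSpace ℝ (Fin (n + 1))}
    (hx : 0 ≤ x (Fin.last n)) (hy : 0 ≤ y (Fin.last n)) :
    bdryMaxDist x y ≤ dist (reflect x) y := by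
  have hbdd : BddBelow ((fun z => max (dist x z) (dist y z)) '' upperHalfSpaceBdry n) :=
    ⟨0, by rintro _ ⟨z, -, rfl⟩; exact le_max_of_le_left dist_nonneg⟩
  refine (csInf_le hbdd ⟨_, setLast_mem_bdry x, rfl⟩).trans (max_le ?_ ?_) <;>
    rw [← sq_le_sq₀ dist_nonneg dist_nonneg, dist_reflect_sq, dist_comm, dist_setLast_sq]
  · rw [dist_self]
    nlinarith [sq_sub_last_le_dist_sq x y]
  · nlinarith

theorem thRhoH_le_ctildeH {x y : EuclideanSpace ℝ (Fin (n + 1))} (hx : x ∈ upperHalfSpace n)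
    (hy : y ∈ upperHalfSpace n) : thRhoH x y ≤ ctildeH x y := by
  rw [thRhoH_eq, ctildeH_eq]
  refine div_le_div_of_nonneg_left dist_nonneg ?_ (bdryMaxDist_le_dist_reflect hx.le hy.le)
  linarith [dist_reflect_pos hx hy, dist_reflect_div_two_le_bdryMaxDist x y]

theorem ctildeH_le_two_mul_thRhoH {x y : EuclideanSpace ℝ (Fin (n + 1))}
    (hx : x ∈ upperHalfSpace n) (hy : y ∈ upperHalfSpace n) :
    ctildeH x y ≤ 2 * thRhoH x y := by
  rw [thRhoH_eq, ctildeH_eq]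
  calc dist x y / bdryMaxDist x y ≤ dist x y / (dist (reflect x) y / 2) :=
        div_le_div_of_nonneg_left dist_nonneg (half_pos (dist_reflect_pos hx hy))
          (dist_reflect_div_two_le_bdryMaxDist x y)
    _ = 2 * (dist x y / dist (reflect x) y) := by ring

end UpperHalfSpace

open UpperHalfSpace in
theorem stmt_14_general {n : ℕ} (x : EuclideanSpace ℝ (Fin (n + 1)))
    (hx : x ∈ upperHalfSpace n) (r : ℝ) :
    {y | y ∈ upperHalfSpace n ∧ thRhoH x y < r / 2} ⊆
      {y | y ∈ upperHalfSpace n ∧ ctildeH x y < r} ∧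
    {y | y ∈ upperHalfSpace n ∧ ctildeH x y < r} ⊆
      {y | y ∈ upperHalfSpace n ∧ thRhoH x y < r} := by
  constructor
  · rintro y ⟨hy, hth⟩
    exact ⟨hy, by linarith [ctildeH_le_two_mul_thRhoH hx hy]⟩
  · rintro y ⟨hy, hct⟩
    exact ⟨hy, (thRhoH_le_ctildeH hx hy).trans_lt hct⟩

/-- For all `x ∈ ℍⁿ` and `0 < r < 1`:
`B_ρ(x, log((2+r)/(2−r))) ⊆ B_c̃(x, r) ⊆ B_ρ(x, log((1+r)/(1−r)))`, i.e.
`{y ∈ ℍⁿ : th(ρ(x,y)/2) < r/2} ⊆ {y ∈ ℍⁿ : c̃(x,y) < r} ⊆ {y ∈ ℍⁿ : th(ρ(x,y)/2) < r}`. -/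
theorem stmt_14 {n : ℕ} (x : EuclideanSpace ℝ (Fin (n + 1)))
    (hx : x ∈ upperHalfSpace n) (r : ℝ) (hr : r ∈ Ioo (0 : ℝ) 1) :
    {y | y ∈ upperHalfSpace n ∧ thRhoH x y < r / 2} ⊆
      {y | y ∈ upperHalfSpace n ∧ ctildeH x y < r} ∧
    {y | y ∈ upperHalfSpace n ∧ ctildeH x y < r} ⊆
      {y | y ∈ upperHalfSpace n ∧ thRhoH x y < r} :=
  stmt_14_general x hx r
end

section
/- For every point x of the unit ball 𝔹ⁿ and every 0 < r < 1, the ball inclusions B_ρ(x, log((2+r)/(2−r))) ⊆ B_c̃(x, r) ⊆ B_ρ(x, log((1+r)/(1−r))) hold; equivalently, {y ∈ 𝔹ⁿ : |x−y|/√(|x−y|² + (1−|x|²)(1−|y|²)) < r/2} ⊆ {y ∈ 𝔹ⁿ : c̃_{𝔹ⁿ}(x,y) < r} ⊆ {y ∈ 𝔹ⁿ : |x−y|/√(|x−y|² + (1−|x|²)(1−|y|²)) < r}. -/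
/-!
Write `A = |x - y|² + (1 - |x|²)(1 - |y|²)`, so that `th(ρ(x, y)/2) = |x - y| / √A`. Both
inclusions follow from `√A / 2 ≤ inf_{|z| = 1} max {|x - z|, |y - z|} ≤ √A`.

Lower bound: `√A = ‖|y| x - y/|y|‖`, and for `|z| = 1` also `‖|y| z - y/|y|‖ = |y - z|`, so the
triangle inequality through `|y| z` gives `√A ≤ |y| |x - z| + |y - z| ≤ 2 max {|x - z|, |y - z|}`.

Upper bound: for `|z| = 1`, `|x - z|² ≤ A` is the linear condition
`⟪x, z⟫ ≥ ⟪x, y⟫ + |x|² (1 - |y|²) / 2`, and symmetrically for `y`. The point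
`((1 - |y|²) x + (1 - |x|²) y) / (1 - |x|² |y|²)` of the closed ball satisfies both; moving it to
the sphere along a direction orthogonal to `x` on which `⟪y, ·⟫ ≥ 0` (here `n ≥ 2` is needed)
keeps them.
-/

open Metric Set

open scoped RealInnerProductSpace

theorem dist_sq_add_mul_pos {E : Type*} [SeminormedAddGroup E] {x y : E} (hx : ‖x‖ < 1)
    (hy : ‖y‖ < 1) : 0 < dist x y ^ 2 + (1 - ‖x‖ ^ 2) * (1 - ‖y‖ ^ 2) := by
  have hx' : 0 < 1 - ‖x‖ ^ 2 := by nlinarith [norm_nonneg x]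
  have hy' : 0 < 1 - ‖y‖ ^ 2 := by nlinarith [norm_nonneg y]
  positivity

section InnerProductSpace

variable {E : Type*} [NormedAddCommGroup E] [InnerProductSpace ℝ E]

theorem dist_sq_add_mul_eq (x y : E) :
    dist x y ^ 2 + (1 - ‖x‖ ^ 2) * (1 - ‖y‖ ^ 2) = 1 + ‖x‖ ^ 2 * ‖y‖ ^ 2 - 2 * ⟪x, y⟫ := by
  rw [dist_eq_norm, norm_sub_sq_real]; ring

theorem dist_sq_add_mul_nonneg (x y : E) :
    0 ≤ dist x y ^ 2 + (1 - ‖x‖ ^ 2) * (1 - ‖y‖ ^ 2) := by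
  rw [dist_sq_add_mul_eq]
  nlinarith [real_inner_le_norm x y, sq_nonneg (1 - ‖x‖ * ‖y‖)]

theorem norm_smul_sub_inv_smul_sq (x : E) {y : E} (hy : y ≠ 0) :
    ‖‖y‖ • x - ‖y‖⁻¹ • y‖ ^ 2 = dist x y ^ 2 + (1 - ‖x‖ ^ 2) * (1 - ‖y‖ ^ 2) := by
  have hy' : ‖y‖ ≠ 0 := norm_ne_zero_iff.mpr hy
  rw [dist_sq_add_mul_eq, norm_sub_sq_real, norm_smul, norm_smul, real_inner_smul_left,
    real_inner_smul_right, Real.norm_of_nonneg (norm_nonneg y),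
    Real.norm_of_nonneg (inv_nonneg.mpr (norm_nonneg y))]
  field_simp
  ring

theorem sqrt_dist_sq_add_mul_le {x y z : E} (hz : ‖z‖ = 1) :
    √(dist x y ^ 2 + (1 - ‖x‖ ^ 2) * (1 - ‖y‖ ^ 2)) ≤ ‖y‖ * dist x z + dist y z := by
  rcases eq_or_ne y 0 with rfl | hy
  · simp [dist_zero_left, hz]
  have hzy : ‖‖y‖ • z - ‖y‖⁻¹ • y‖ = dist z y := by
    rw [← sq_eq_sq₀ (norm_nonneg _) dist_nonneg, norm_smul_sub_inv_smul_sq z hy, hz]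
    ring
  rw [← norm_smul_sub_inv_smul_sq x hy, Real.sqrt_sq (norm_nonneg _)]
  calc ‖‖y‖ • x - ‖y‖⁻¹ • y‖ = ‖‖y‖ • (x - z) + (‖y‖ • z - ‖y‖⁻¹ • y)‖ := by
        congr 1; module
    _ ≤ ‖‖y‖ • (x - z)‖ + ‖‖y‖ • z - ‖y‖⁻¹ • y‖ := norm_add_le _ _
    _ = ‖y‖ * dist x z + dist y z := by
        rw [hzy, norm_smul, Real.norm_of_nonneg (norm_nonneg y), ← dist_eq_norm, dist_comm z y]

theorem sqrt_dist_sq_add_mul_le_two_mul_max {x y z : E} (hy : ‖y‖ ≤ 1) (hz : ‖z‖ = 1) :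
    √(dist x y ^ 2 + (1 - ‖x‖ ^ 2) * (1 - ‖y‖ ^ 2)) ≤ 2 * max (dist x z) (dist y z) := by
  have hxz : ‖y‖ * dist x z ≤ max (dist x z) (dist y z) :=
    (mul_le_of_le_one_left dist_nonneg hy).trans (le_max_left _ _)
  linarith [sqrt_dist_sq_add_mul_le (x := x) (y := y) hz, le_max_right (dist x z) (dist y z)]

theorem mul_le_inner_smul_add_smul (x : E) {y : E} (hy : ‖y‖ ≤ 1) :
    (1 - ‖x‖ ^ 2 * ‖y‖ ^ 2) * (⟪x, y⟫ + ‖x‖ ^ 2 * (1 - ‖y‖ ^ 2) / 2) ≤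
      ⟪x, (1 - ‖y‖ ^ 2) • x + (1 - ‖x‖ ^ 2) • y⟫ := by
  have hq : 0 ≤ 1 - ‖y‖ ^ 2 := by nlinarith [norm_nonneg y]
  have hA := dist_sq_add_mul_nonneg x y
  rw [dist_sq_add_mul_eq] at hA
  rw [inner_add_right, real_inner_smul_right, real_inner_smul_right, real_inner_self_eq_norm_sq]
  -- the right side minus the left side is `‖x‖² (1 - ‖y‖²) / 2` times `hA`'s right side
  nlinarith [mul_nonneg (mul_nonneg (sq_nonneg ‖x‖) hq) hA]

theorem norm_smul_add_smul_sq_le {x y : E} (hx : ‖x‖ ≤ 1) (hy : ‖y‖ ≤ 1) :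
    ‖(1 - ‖y‖ ^ 2) • x + (1 - ‖x‖ ^ 2) • y‖ ^ 2 ≤ (1 - ‖x‖ ^ 2 * ‖y‖ ^ 2) ^ 2 := by
  have hp : 0 ≤ 1 - ‖x‖ ^ 2 := by nlinarith [norm_nonneg x]
  have hq : 0 ≤ 1 - ‖y‖ ^ 2 := by nlinarith [norm_nonneg y]
  have hA := dist_sq_add_mul_nonneg x y
  rw [dist_sq_add_mul_eq] at hA
  rw [norm_add_sq_real, norm_smul, norm_smul, real_inner_smul_left, real_inner_smul_right,
    Real.norm_of_nonneg hp, Real.norm_of_nonneg hq]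
  -- the right side minus the left side is `(1 - ‖x‖²) (1 - ‖y‖²)` times `hA`'s right side
  nlinarith [mul_nonneg (mul_nonneg hp hq) hA]

theorem exists_norm_le_one_le_inner {x y : E} (hx : ‖x‖ < 1) (hy : ‖y‖ < 1) :
    ∃ w : E, ‖w‖ ≤ 1 ∧ ⟪x, y⟫ + ‖x‖ ^ 2 * (1 - ‖y‖ ^ 2) / 2 ≤ ⟪x, w⟫ ∧
      ⟪x, y⟫ + ‖y‖ ^ 2 * (1 - ‖x‖ ^ 2) / 2 ≤ ⟪y, w⟫ := by
  set N := 1 - ‖x‖ ^ 2 * ‖y‖ ^ 2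
  have hN : 0 < N := by
    have : ‖x‖ * ‖y‖ < 1 := mul_lt_one_of_nonneg_of_lt_one_left (norm_nonneg x) hx hy.le
    nlinarith [mul_nonneg (norm_nonneg x) (norm_nonneg y)]
  set w₀ := (1 - ‖y‖ ^ 2) • x + (1 - ‖x‖ ^ 2) • y
  have hw₀ : ‖w₀‖ ≤ N :=
    (pow_le_pow_iff_left₀ (norm_nonneg _) hN.le two_ne_zero).mp
      (norm_smul_add_smul_sq_le hx.le hy.le)
  have hxw₀ := mul_le_inner_smul_add_smul x hy.le
  have hyw₀ := mul_le_inner_smul_add_smul y hx.le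
  rw [real_inner_comm x y, add_comm ((1 - ‖x‖ ^ 2) • y), mul_comm (‖y‖ ^ 2) (‖x‖ ^ 2)] at hyw₀
  refine ⟨N⁻¹ • w₀, ?_, ?_, ?_⟩
  · rw [norm_smul, Real.norm_of_nonneg (inv_nonneg.mpr hN.le), inv_mul_le_iff₀ hN]
    simpa using hw₀
  · rw [real_inner_smul_right, le_inv_mul_iff₀ hN]
    exact hxw₀
  · rw [real_inner_smul_right, le_inv_mul_iff₀ hN]
    exact hyw₀

theorem exists_ne_zero_inner_eq_zero_inner_nonneg [FiniteDimensional ℝ E]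
    (hE : 2 ≤ Module.finrank ℝ E) (x y : E) : ∃ δ : E, δ ≠ 0 ∧ ⟪x, δ⟫ = 0 ∧ 0 ≤ ⟪y, δ⟫ := by
  have hx : (ℝ ∙ x)ᗮ ≠ ⊥ := by
    intro h
    have hdim := (ℝ ∙ x).finrank_add_finrank_orthogonal
    have hspan : Module.finrank ℝ (ℝ ∙ x) ≤ 1 := by
      simpa using finrank_span_le_card (R := ℝ) ({x} : Set E)
    rw [h, finrank_bot] at hdim
    omega
  obtain ⟨δ, hδx, hδ⟩ := Submodule.exists_mem_ne_zero_of_ne_bot hx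
  have hxδ : ⟪x, δ⟫ = 0 := Submodule.mem_orthogonal_singleton_iff_inner_right.mp hδx
  rcases le_total 0 ⟪y, δ⟫ with hy | hy
  · exact ⟨δ, hδ, hxδ, hy⟩
  · exact ⟨-δ, neg_ne_zero.mpr hδ, by simp [hxδ], by simpa using hy⟩

theorem exists_nonneg_norm_add_smul_eq_one {w δ : E} (hw : ‖w‖ ≤ 1) (hδ : δ ≠ 0) :
    ∃ t : ℝ, 0 ≤ t ∧ ‖w + t • δ‖ = 1 := by
  have hδ' : 0 < ‖δ‖ := norm_pos_iff.mpr hδ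
  have hT : 1 ≤ ‖w + (2 / ‖δ‖) • δ‖ := by
    have := norm_sub_norm_le ((2 / ‖δ‖) • δ) (-w)
    rw [norm_smul, Real.norm_of_nonneg (by positivity), div_mul_cancel₀ _ hδ'.ne', norm_neg,
      sub_neg_eq_add, add_comm] at this
    linarith
  obtain ⟨t, ht, ht1⟩ := intermediate_value_Icc (by positivity : (0 : ℝ) ≤ 2 / ‖δ‖)
    (f := fun t : ℝ => ‖w + t • δ‖) (by fun_prop) ⟨by simpa using hw, hT⟩
  exact ⟨t, ht.1, ht1⟩

theorem exists_norm_eq_one_le_inner [FiniteDimensional ℝ E] (hE : 2 ≤ Module.finrank ℝ E)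
    {x y : E} (hx : ‖x‖ < 1) (hy : ‖y‖ < 1) :
    ∃ z : E, ‖z‖ = 1 ∧ ⟪x, y⟫ + ‖x‖ ^ 2 * (1 - ‖y‖ ^ 2) / 2 ≤ ⟪x, z⟫ ∧
      ⟪x, y⟫ + ‖y‖ ^ 2 * (1 - ‖x‖ ^ 2) / 2 ≤ ⟪y, z⟫ := by
  obtain ⟨w, hw, hxw, hyw⟩ := exists_norm_le_one_le_inner hx hy
  obtain ⟨δ, hδ, hxδ, hyδ⟩ := exists_ne_zero_inner_eq_zero_inner_nonneg hE x y
  obtain ⟨t, ht, hz⟩ := exists_nonneg_norm_add_smul_eq_one hw hδ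
  refine ⟨w + t • δ, hz, ?_, ?_⟩ <;> rw [inner_add_right, real_inner_smul_right]
  · rwa [hxδ, mul_zero, add_zero]
  · exact hyw.trans (le_add_of_nonneg_right (mul_nonneg ht hyδ))

theorem exists_norm_eq_one_max_dist_le_sqrt [FiniteDimensional ℝ E]
    (hE : 2 ≤ Module.finrank ℝ E) {x y : E} (hx : ‖x‖ < 1) (hy : ‖y‖ < 1) :
    ∃ z : E, ‖z‖ = 1 ∧
      max (dist x z) (dist y z) ≤ √(dist x y ^ 2 + (1 - ‖x‖ ^ 2) * (1 - ‖y‖ ^ 2)) := by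
  obtain ⟨z, hz, hxz, hyz⟩ := exists_norm_eq_one_le_inner hE hx hy
  refine ⟨z, hz, max_le (Real.le_sqrt_of_sq_le ?_) (Real.le_sqrt_of_sq_le ?_)⟩ <;>
    rw [dist_sq_add_mul_eq, dist_eq_norm, norm_sub_sq_real, hz] <;> linarith

theorem sqrt_div_two_le_sInf [Nontrivial E] {x y : E} (hy : ‖y‖ ≤ 1) :
    √(dist x y ^ 2 + (1 - ‖x‖ ^ 2) * (1 - ‖y‖ ^ 2)) / 2 ≤
      sInf ((fun z => max (dist x z) (dist y z)) '' sphere (0 : E) 1) := by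
  refine le_csInf ((NormedSpace.sphere_nonempty.mpr zero_le_one).image _) ?_
  rintro _ ⟨z, hz, rfl⟩
  linarith [sqrt_dist_sq_add_mul_le_two_mul_max (x := x) hy (mem_sphere_zero_iff_norm.mp hz)]

theorem sInf_le_sqrt [FiniteDimensional ℝ E] (hE : 2 ≤ Module.finrank ℝ E) {x y : E}
    (hx : ‖x‖ < 1) (hy : ‖y‖ < 1) :
    sInf ((fun z => max (dist x z) (dist y z)) '' sphere (0 : E) 1) ≤
      √(dist x y ^ 2 + (1 - ‖x‖ ^ 2) * (1 - ‖y‖ ^ 2)) := by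
  obtain ⟨z, hz, hmax⟩ := exists_norm_eq_one_max_dist_le_sqrt hE hx hy
  have hbdd : BddBelow ((fun z => max (dist x z) (dist y z)) '' sphere (0 : E) 1) := by
    refine ⟨0, ?_⟩
    rintro _ ⟨z, -, rfl⟩
    exact le_max_of_le_left dist_nonneg
  exact (csInf_le hbdd ⟨z, mem_sphere_zero_iff_norm.mpr hz, rfl⟩).trans hmax

end InnerProductSpace

section UnitBall

variable {n : ℕ} {x y : EuclideanSpace ℝ (Fin (n + 2))}

theorem thRhoB_le_ctildeB (hx : ‖x‖ < 1) (hy : ‖y‖ < 1) : thRhoB x y ≤ ctildeB x y := by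
  have hA := Real.sqrt_pos.mpr (dist_sq_add_mul_pos hx hy)
  have hm := sqrt_div_two_le_sInf (x := x) hy.le
  exact div_le_div_of_nonneg_left dist_nonneg (by linarith)
    (sInf_le_sqrt (by simp) hx hy)

theorem ctildeB_le_two_mul_thRhoB (hx : ‖x‖ < 1) (hy : ‖y‖ < 1) :
    ctildeB x y ≤ 2 * thRhoB x y :=
  calc ctildeB x y ≤ dist x y / (√(dist x y ^ 2 + (1 - ‖x‖ ^ 2) * (1 - ‖y‖ ^ 2)) / 2) :=
        div_le_div_of_nonneg_left dist_nonneg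
          (half_pos (Real.sqrt_pos.mpr (dist_sq_add_mul_pos hx hy))) (sqrt_div_two_le_sInf hy.le)
    _ = 2 * thRhoB x y := by rw [thRhoB]; ring

end UnitBall

theorem stmt_15_general {n : ℕ} (x : EuclideanSpace ℝ (Fin (n + 2)))
    (hx : x ∈ ball (0 : EuclideanSpace ℝ (Fin (n + 2))) 1) (r : ℝ) :
    {y | y ∈ ball (0 : EuclideanSpace ℝ (Fin (n + 2))) 1 ∧ thRhoB x y < r / 2} ⊆
      {y | y ∈ ball (0 : EuclideanSpace ℝ (Fin (n + 2))) 1 ∧ ctildeB x y < r} ∧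
    {y | y ∈ ball (0 : EuclideanSpace ℝ (Fin (n + 2))) 1 ∧ ctildeB x y < r} ⊆
      {y | y ∈ ball (0 : EuclideanSpace ℝ (Fin (n + 2))) 1 ∧ thRhoB x y < r} := by
  rw [mem_ball_zero_iff] at hx
  refine ⟨fun y ⟨hy, hth⟩ => ⟨hy, ?_⟩, fun y ⟨hy, hc⟩ => ⟨hy, ?_⟩⟩ <;> rw [mem_ball_zero_iff] at hy
  · linarith [ctildeB_le_two_mul_thRhoB hx hy]
  · exact (thRhoB_le_ctildeB hx hy).trans_lt hc

/-- For all `x ∈ 𝔹ⁿ` and `0 < r < 1`: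
`B_ρ(x, log((2+r)/(2−r))) ⊆ B_c̃(x, r) ⊆ B_ρ(x, log((1+r)/(1−r)))`, i.e.
`{y ∈ 𝔹ⁿ : th(ρ(x,y)/2) < r/2} ⊆ {y ∈ 𝔹ⁿ : c̃(x,y) < r} ⊆ {y ∈ 𝔹ⁿ : th(ρ(x,y)/2) < r}`. -/
theorem stmt_15 {n : ℕ} (x : EuclideanSpace ℝ (Fin (n + 2)))
    (hx : x ∈ ball (0 : EuclideanSpace ℝ (Fin (n + 2))) 1) (r : ℝ) (hr : r ∈ Ioo (0 : ℝ) 1) :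
    {y | y ∈ ball (0 : EuclideanSpace ℝ (Fin (n + 2))) 1 ∧ thRhoB x y < r / 2} ⊆
      {y | y ∈ ball (0 : EuclideanSpace ℝ (Fin (n + 2))) 1 ∧ ctildeB x y < r} ∧
    {y | y ∈ ball (0 : EuclideanSpace ℝ (Fin (n + 2))) 1 ∧ ctildeB x y < r} ⊆
      {y | y ∈ ball (0 : EuclideanSpace ℝ (Fin (n + 2))) 1 ∧ thRhoB x y < r} :=
  stmt_15_general x hx r
end

section
/- Let x, y be points of the upper half-space ℍⁿ and let x′ = (x₁,…,x_{n−1},0), y′ = (y₁,…,y_{n−1},0) be their orthogonal projections to ∂ℍⁿ. Then inf_{z∈∂ℍⁿ} max{|x−z|, |y−z|} = inf_{z∈[x′,y′]} max{|x−z|, |y−z|}, where [x′,y′] denotes the closed line segment from x′ to y′; in particular the infimum over ∂ℍⁿ is attained at a point of the segment [x′,y′]. -/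
open Metric Set

lemma dist_sq_split {n : ℕ} (x x' z : EuclideanSpace ℝ (Fin (n+1)))
    (h1 : ∀ i, i ≠ Fin.last n → x' i = x i) (h2 : x' (Fin.last n) = 0)
    (hz : z (Fin.last n) = 0) :
    dist x z ^ 2 = dist x' z ^ 2 + (x (Fin.last n))^2 := by
  rw [EuclideanSpace.dist_eq, EuclideanSpace.dist_eq, Real.sq_sqrt (by positivity),
    Real.sq_sqrt (by positivity),
    ← Finset.sum_erase_add _ _ (Finset.mem_univ (Fin.last n)),
    ← Finset.sum_erase_add _ _ (Finset.mem_univ (Fin.last n))]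
  have hs : ∀ i ∈ Finset.univ.erase (Fin.last n),
      dist (x' i) (z i) ^ 2 = dist (x i) (z i) ^ 2 := by
    intro i hi
    rw [h1 i (Finset.ne_of_mem_erase hi)]
  rw [Finset.sum_congr rfl hs, h2, hz]
  have : dist (x (Fin.last n)) 0 = |x (Fin.last n)| := by simp [Real.dist_eq]
  rw [this, sq_abs]
  simp

/-- For `x, y ∈ ℍⁿ` with orthogonal projections `x′, y′` to `∂ℍⁿ`:
`inf_{z∈∂ℍⁿ} max{|x−z|, |y−z|} = inf_{z∈[x′,y′]} max{|x−z|, |y−z|}`, and the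
infimum over `∂ℍⁿ` is attained at a point of the segment `[x′, y′]`. -/
theorem stmt_17 {n : ℕ} (x y : EuclideanSpace ℝ (Fin (n + 1)))
    (hx : x ∈ upperHalfSpace n) (hy : y ∈ upperHalfSpace n)
    (x' y' : EuclideanSpace ℝ (Fin (n + 1)))
    (hx' : x' = Function.update x (Fin.last n) 0)
    (hy' : y' = Function.update y (Fin.last n) 0) :
    sInf ((fun z => max (dist x z) (dist y z)) '' upperHalfSpaceBdry n) =
      sInf ((fun z => max (dist x z) (dist y z)) '' segment ℝ x' y') ∧
    ∃ z ∈ segment ℝ x' y',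
      IsGLB ((fun w => max (dist x w) (dist y w)) '' upperHalfSpaceBdry n)
        (max (dist x z) (dist y z)) := by
  set f : EuclideanSpace ℝ (Fin (n + 1)) → ℝ := fun z => max (dist x z) (dist y z) with hf
  -- facts about x', y'
  have hx'1 : ∀ i, i ≠ Fin.last n → x' i = x i := by
    intro i hi; rw [hx']; exact Function.update_of_ne hi _ _
  have hx'2 : x' (Fin.last n) = 0 := by rw [hx']; exact Function.update_self _ _ _
  have hy'1 : ∀ i, i ≠ Fin.last n → y' i = y i := by
    intro i hi; rw [hy']; exact Function.update_of_ne hi _ _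
  have hy'2 : y' (Fin.last n) = 0 := by rw [hy']; exact Function.update_self _ _ _
  -- segment ⊆ boundary
  have hseg : segment ℝ x' y' ⊆ upperHalfSpaceBdry n := by
    rintro w ⟨a, b, ha, hb, hab, rfl⟩
    show (a • x' + b • y') (Fin.last n) = 0
    have : (a • x' + b • y') (Fin.last n) = a * x' (Fin.last n) + b * y' (Fin.last n) := rfl
    rw [this, hx'2, hy'2]; ring
  -- the comparison: dist decreases when going from z' to something closer among boundary pts
  have hcomp : ∀ z w : EuclideanSpace ℝ (Fin (n+1)), z ∈ upperHalfSpaceBdry n →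
      w ∈ upperHalfSpaceBdry n → dist x' w ≤ dist x' z → dist y' w ≤ dist y' z →
      f w ≤ f z := by
    intro z w hz hw h1 h2
    have e1 : dist x w ^ 2 = dist x' w ^ 2 + (x (Fin.last n))^2 := dist_sq_split x x' w hx'1 hx'2 hw
    have e2 : dist x z ^ 2 = dist x' z ^ 2 + (x (Fin.last n))^2 := dist_sq_split x x' z hx'1 hx'2 hz
    have e3 : dist y w ^ 2 = dist y' w ^ 2 + (y (Fin.last n))^2 := dist_sq_split y y' w hy'1 hy'2 hw
    have e4 : dist y z ^ 2 = dist y' z ^ 2 + (y (Fin.last n))^2 := dist_sq_split y y' z hy'1 hy'2 hz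
    have d1 : dist x w ≤ dist x z := by
      apply le_of_pow_le_pow_left₀ two_ne_zero dist_nonneg
      rw [e1, e2]
      have := pow_le_pow_left₀ dist_nonneg h1 2
      linarith
    have d2 : dist y w ≤ dist y z := by
      apply le_of_pow_le_pow_left₀ two_ne_zero dist_nonneg
      rw [e3, e4]
      have := pow_le_pow_left₀ dist_nonneg h2 2
      linarith
    exact max_le_max d1 d2
  -- for each boundary z there is a segment point w at least as good
  have hkey : ∀ z ∈ upperHalfSpaceBdry n, ∃ w ∈ segment ℝ x' y', f w ≤ f z := by
    intro z hz
    set d := dist x' y' with hd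
    by_cases hd0 : d = 0
    · refine ⟨x', left_mem_segment ℝ x' y', hcomp z x' hz (hseg (left_mem_segment ℝ x' y'))
        (by simpa using dist_nonneg) ?_⟩
      have : y' = x' := by
        rw [← dist_eq_zero, dist_comm]; exact hd0
      rw [this]; simpa using dist_nonneg
    · have hdpos : 0 < d := lt_of_le_of_ne dist_nonneg (Ne.symm hd0)
      set a := dist x' z with ha
      set t : ℝ := min (a / d) 1 with ht
      have ht0 : 0 ≤ t := le_min (by positivity) zero_le_one
      have ht1 : t ≤ 1 := min_le_right _ _
      refine ⟨(1 - t) • x' + t • y', ⟨1 - t, t, by linarith, ht0, by ring, rfl⟩, ?_⟩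
      have hw : ((1 - t) • x' + t • y') ∈ upperHalfSpaceBdry n :=
        hseg ⟨1 - t, t, by linarith, ht0, by ring, rfl⟩
      apply hcomp z _ hz hw
      · -- dist x' w = t * d ≤ a
        have : dist x' ((1 - t) • x' + t • y') = t * d := by
          have : x' - ((1 - t) • x' + t • y') = t • (x' - y') := by
            module
          rw [dist_eq_norm, this, norm_smul, Real.norm_eq_abs, abs_of_nonneg ht0,
            ← dist_eq_norm]
        rw [this]
        calc t * d = min (a / d * d) (1 * d) := by
              rw [ht, min_mul_of_nonneg _ _ hdpos.le]
          _ ≤ a / d * d := min_le_left _ _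
          _ = a := div_mul_cancel₀ a hd0
      · -- dist y' w = (1-t) * d ≤ dist y' z
        have hdy : dist y' ((1 - t) • x' + t • y') = (1 - t) * d := by
          have : y' - ((1 - t) • x' + t • y') = (1 - t) • (y' - x') := by
            module
          rw [dist_eq_norm, this, norm_smul, Real.norm_eq_abs, abs_of_nonneg (by linarith),
            ← dist_eq_norm, dist_comm y' x']
        rw [hdy]
        have htri : d ≤ a + dist y' z := by
          rw [hd, ha, dist_comm y' z]; exact dist_triangle x' z y'
        have hb : 0 ≤ dist y' z := dist_nonneg
        rcases min_cases (a / d) 1 with ⟨hm, hle⟩ | ⟨hm, hle⟩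
        · have : t * d = a := by rw [ht, hm, div_mul_cancel₀ a hd0]
          nlinarith
        · have : t = 1 := by rw [ht, hm]
          rw [this]; simpa using hb
  -- minimize f over the compact segment
  have hcont : Continuous f := (continuous_const.dist continuous_id).max
    (continuous_const.dist continuous_id)
  have hcpt : IsCompact (segment ℝ x' y') := by
    rw [segment_eq_image]
    exact (isCompact_Icc).image (by continuity)
  obtain ⟨z₀, hz₀mem, hz₀min⟩ := hcpt.exists_isMinOn ⟨x', left_mem_segment ℝ x' y'⟩
    hcont.continuousOn
  have hz₀bd : z₀ ∈ upperHalfSpaceBdry n := hseg hz₀mem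
  -- f z₀ is GLB of boundary image
  have hglb : IsGLB (f '' upperHalfSpaceBdry n) (f z₀) := by
    constructor
    · rintro _ ⟨z, hz, rfl⟩
      obtain ⟨w, hw, hfw⟩ := hkey z hz
      exact le_trans (hz₀min hw) hfw
    · intro c hc
      exact hc ⟨z₀, hz₀bd, rfl⟩
  have hglb' : IsGLB (f '' segment ℝ x' y') (f z₀) := by
    constructor
    · rintro _ ⟨w, hw, rfl⟩
      exact hz₀min hw
    · intro c hc
      exact hc ⟨z₀, hz₀mem, rfl⟩
  refine ⟨?_, z₀, hz₀mem, hglb⟩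
  rw [hglb.csInf_eq ⟨f z₀, ⟨z₀, hz₀bd, rfl⟩⟩, hglb'.csInf_eq ⟨f z₀, ⟨z₀, hz₀mem, rfl⟩⟩]
end

section
/- Let x, y be points of the upper half-space ℍⁿ with x′ ≠ y′ and |x−y| > √((xₙ−yₙ)² + |xₙ²−yₙ²|), where x′, y′ are the orthogonal projections of x, y to ∂ℍⁿ. Then there is a unique k ∈ (0,1) such that the point z = x′ + k(y′−x′) satisfies |x−z| = |y−z|, namely k = (|x′−y′|² − xₙ² + yₙ²)/(2|x′−y′|²), and for this z one has |x−z| = (|x−y|/2)·√((|x−y|² + 4·xₙ·yₙ)/(|x−y|² − (xₙ−yₙ)²)) and inf_{w∈∂ℍⁿ} max{|x−w|, |y−w|} = |x−z|. -/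
open Metric Set

namespace EuclideanSpace

variable {ι : Type*} {i : ι}

theorem dist_sq_eq_dist_sq_add_sq [Fintype ι] {x y x' y' : EuclideanSpace ℝ ι}
    (hx : ∀ j ≠ i, x' j = x j) (hy : ∀ j ≠ i, y' j = y j) (hi : x' i = y' i) :
    dist x y ^ 2 = dist x' y' ^ 2 + (x i - y i) ^ 2 := by
  classical
  have hoff : ∑ j ∈ {i}ᶜ, dist (x j) (y j) ^ 2 = ∑ j ∈ {i}ᶜ, dist (x' j) (y' j) ^ 2 :=
    Finset.sum_congr rfl fun j hj => by
      have hji : j ≠ i := by simpa using hj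
      rw [hx j hji, hy j hji]
  rw [dist_sq_eq, dist_sq_eq, Fintype.sum_eq_add_sum_compl i, Fintype.sum_eq_add_sum_compl i,
    hoff, hi, dist_self, Real.dist_eq, sq_abs]
  ring

variable [DecidableEq ι] {x y x' y' : EuclideanSpace ℝ ι}

theorem apply_of_ofLp_eq_update (hx' : x'.ofLp = Function.update x.ofLp i 0) {j : ι}
    (hj : j ≠ i) : x' j = x j :=
  (congrFun hx' j).trans (Function.update_of_ne hj _ _)

theorem apply_self_of_ofLp_eq_update (hx' : x'.ofLp = Function.update x.ofLp i 0) :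
    x' i = 0 :=
  (congrFun hx' i).trans (Function.update_self _ _ _)

theorem segment_apply_eq_zero (hx' : x'.ofLp = Function.update x.ofLp i 0)
    (hy' : y'.ofLp = Function.update y.ofLp i 0) (t : ℝ) :
    (x' + t • (y' - x')) i = 0 := by
  simp [apply_self_of_ofLp_eq_update hx', apply_self_of_ofLp_eq_update hy']

variable [Fintype ι]

theorem dist_sq_eq_of_ofLp_eq_update (hx' : x'.ofLp = Function.update x.ofLp i 0)
    (hy' : y'.ofLp = Function.update y.ofLp i 0) :
    dist x y ^ 2 = dist x' y' ^ 2 + (x i - y i) ^ 2 :=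
  dist_sq_eq_dist_sq_add_sq (fun _ => apply_of_ofLp_eq_update hx')
    (fun _ => apply_of_ofLp_eq_update hy')
    ((apply_self_of_ofLp_eq_update hx').trans (apply_self_of_ofLp_eq_update hy').symm)

theorem dist_sq_eq_of_apply_eq_zero (hx' : x'.ofLp = Function.update x.ofLp i 0)
    {w : EuclideanSpace ℝ ι} (hw : w i = 0) :
    dist x w ^ 2 = dist x' w ^ 2 + x i ^ 2 := by
  rw [dist_sq_eq_dist_sq_add_sq (fun _ => apply_of_ofLp_eq_update hx') (fun _ _ => rfl)
    ((apply_self_of_ofLp_eq_update hx').trans hw.symm), hw, sub_zero]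

theorem dist_left_sq_segment (hx' : x'.ofLp = Function.update x.ofLp i 0)
    (hy' : y'.ofLp = Function.update y.ofLp i 0) (t : ℝ) :
    dist x (x' + t • (y' - x')) ^ 2 = (t * dist x' y') ^ 2 + x i ^ 2 := by
  rw [dist_sq_eq_of_apply_eq_zero hx' (segment_apply_eq_zero hx' hy' t), add_comm x',
    ← AffineMap.lineMap_apply_module', dist_left_lineMap, Real.norm_eq_abs, mul_pow, sq_abs,
    mul_pow]

theorem dist_right_sq_segment (hx' : x'.ofLp = Function.update x.ofLp i 0)
    (hy' : y'.ofLp = Function.update y.ofLp i 0) (t : ℝ) :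
    dist y (x' + t • (y' - x')) ^ 2 = ((1 - t) * dist x' y') ^ 2 + y i ^ 2 := by
  rw [dist_sq_eq_of_apply_eq_zero hy' (segment_apply_eq_zero hx' hy' t), add_comm x',
    ← AffineMap.lineMap_apply_module', dist_right_lineMap, Real.norm_eq_abs, mul_pow, sq_abs,
    mul_pow]

theorem isLeast_max_dist_segment (hx' : x'.ofLp = Function.update x.ofLp i 0)
    (hy' : y'.ofLp = Function.update y.ofLp i 0) {t : ℝ} (ht : t ∈ Icc (0 : ℝ) 1)
    (heq : dist x (x' + t • (y' - x')) = dist y (x' + t • (y' - x'))) :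
    IsLeast ((fun w => max (dist x w) (dist y w)) '' {w | w i = 0})
      (dist x (x' + t • (y' - x'))) := by
  set z := x' + t • (y' - x')
  refine ⟨⟨z, segment_apply_eq_zero hx' hy' t, by simp only [heq, max_self]⟩, ?_⟩
  rintro _ ⟨w, hw, rfl⟩
  have hd := dist_nonneg (x := x') (y := y')
  have hsplit : t * dist x' y' ≤ dist x' w ∨ (1 - t) * dist x' y' ≤ dist y' w := by
    by_contra! hlt
    linarith [dist_triangle_right x' y' w]
  rcases hsplit with hle | hle
  · refine le_max_of_le_left ((pow_le_pow_iff_left₀ dist_nonneg dist_nonneg two_ne_zero).1 ?_)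
    rw [dist_left_sq_segment hx' hy', dist_sq_eq_of_apply_eq_zero hx' hw]
    gcongr
    exact mul_nonneg ht.1 hd
  · refine le_max_of_le_right ((pow_le_pow_iff_left₀ dist_nonneg dist_nonneg two_ne_zero).1 ?_)
    rw [heq, dist_right_sq_segment hx' hy', dist_sq_eq_of_apply_eq_zero hy' hw]
    gcongr
    exact mul_nonneg (sub_nonneg.2 ht.2) hd

end EuclideanSpace

open EuclideanSpace

section HeightEquation

variable {a b d : ℝ}

theorem sq_add_sq_eq_iff_eq_div (hd : d ≠ 0) (t : ℝ) :
    (t * d) ^ 2 + a ^ 2 = ((1 - t) * d) ^ 2 + b ^ 2 ↔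
      t = (d ^ 2 - a ^ 2 + b ^ 2) / (2 * d ^ 2) := by
  rw [eq_div_iff (by positivity)]
  constructor <;> intro h <;> linear_combination h

theorem div_mem_Ioo_of_abs_sq_sub_sq_lt (h : |a ^ 2 - b ^ 2| < d ^ 2) :
    (d ^ 2 - a ^ 2 + b ^ 2) / (2 * d ^ 2) ∈ Ioo (0 : ℝ) 1 := by
  obtain ⟨hlo, hhi⟩ := abs_lt.1 h
  have hd : 0 < 2 * d ^ 2 := by linarith [abs_nonneg (a ^ 2 - b ^ 2)]
  exact ⟨div_pos (by linarith) hd, (div_lt_one hd).2 (by linarith)⟩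

theorem sqrt_sq_add_sq_eq {D k : ℝ} (hD : 0 ≤ D) (hd : d ≠ 0) (hDd : D ^ 2 = d ^ 2 + (a - b) ^ 2)
    (hk : k = (d ^ 2 - a ^ 2 + b ^ 2) / (2 * d ^ 2)) :
    √((k * d) ^ 2 + a ^ 2) = D / 2 * √((D ^ 2 + 4 * a * b) / (D ^ 2 - (a - b) ^ 2)) := by
  rw [← Real.sqrt_sq (by positivity : 0 ≤ D / 2), ← Real.sqrt_mul (by positivity)]
  congr 1
  rw [hk, div_pow, hDd]
  field_simp
  ring

end HeightEquation

theorem stmt_18_general {n : ℕ} (x y : EuclideanSpace ℝ (Fin (n + 1)))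
    (x' y' : EuclideanSpace ℝ (Fin (n + 1)))
    (hx' : x' = Function.update x (Fin.last n) 0)
    (hy' : y' = Function.update y (Fin.last n) 0)
    (h : Real.sqrt ((x (Fin.last n) - y (Fin.last n)) ^ 2 +
        |x (Fin.last n) ^ 2 - y (Fin.last n) ^ 2|) < dist x y)
    (k : ℝ) (hk : k = (dist x' y' ^ 2 - x (Fin.last n) ^ 2 + y (Fin.last n) ^ 2) /
      (2 * dist x' y' ^ 2))
    (z : EuclideanSpace ℝ (Fin (n + 1))) (hz : z = x' + k • (y' - x')) :
    k ∈ Ioo (0 : ℝ) 1 ∧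
    dist x z = dist y z ∧
    (∀ k' ∈ Ioo (0 : ℝ) 1,
      dist x (x' + k' • (y' - x')) = dist y (x' + k' • (y' - x')) → k' = k) ∧
    dist x z = (dist x y / 2) *
      Real.sqrt ((dist x y ^ 2 + 4 * x (Fin.last n) * y (Fin.last n)) /
        (dist x y ^ 2 - (x (Fin.last n) - y (Fin.last n)) ^ 2)) ∧
    sInf ((fun w => max (dist x w) (dist y w)) '' upperHalfSpaceBdry n) = dist x z := by
  have hxy := dist_sq_eq_of_ofLp_eq_update hx' hy'
  have hlt : |x (Fin.last n) ^ 2 - y (Fin.last n) ^ 2| < dist x' y' ^ 2 := by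
    have := (Real.sqrt_lt' ((Real.sqrt_nonneg _).trans_lt h)).1 h
    linarith
  have hd : dist x' y' ≠ 0 := fun h0 => by
    simpa [h0] using (abs_nonneg _).trans_lt hlt
  have hkI : k ∈ Ioo (0 : ℝ) 1 := hk ▸ div_mem_Ioo_of_abs_sq_sub_sq_lt hlt
  have hequi : ∀ t : ℝ, dist x (x' + t • (y' - x')) = dist y (x' + t • (y' - x')) ↔ t = k := by
    intro t
    rw [← pow_left_inj₀ dist_nonneg dist_nonneg two_ne_zero, dist_left_sq_segment hx' hy',
      dist_right_sq_segment hx' hy', hk]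
    exact sq_add_sq_eq_iff_eq_div hd t
  subst hz
  refine ⟨hkI, (hequi k).2 rfl, fun k' _ hk' => (hequi k').1 hk', ?_, ?_⟩
  · rw [← Real.sqrt_sq dist_nonneg, dist_left_sq_segment hx' hy']
    exact sqrt_sq_add_sq_eq dist_nonneg hd hxy hk
  · exact (isLeast_max_dist_segment hx' hy' (Ioo_subset_Icc_self hkI) ((hequi k).2 rfl)).csInf_eq

/-- For `x, y ∈ ℍⁿ` with `x′ ≠ y′` and `|x−y| > √((xₙ−yₙ)² + |xₙ²−yₙ²|)`, there is a
unique `k ∈ (0,1)` such that `z = x′ + k(y′−x′)` satisfies `|x−z| = |y−z|`, namely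
`k = (|x′−y′|² − xₙ² + yₙ²)/(2|x′−y′|²)`; for this `z`,
`|x−z| = (|x−y|/2)·√((|x−y|² + 4 xₙ yₙ)/(|x−y|² − (xₙ−yₙ)²))` and
`inf_{w∈∂ℍⁿ} max{|x−w|, |y−w|} = |x−z|`. -/
theorem stmt_18 {n : ℕ} (x y : EuclideanSpace ℝ (Fin (n + 1)))
    (hx : x ∈ upperHalfSpace n) (hy : y ∈ upperHalfSpace n)
    (x' y' : EuclideanSpace ℝ (Fin (n + 1)))
    (hx' : x' = Function.update x (Fin.last n) 0)
    (hy' : y' = Function.update y (Fin.last n) 0)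
    (hne : x' ≠ y')
    (h : Real.sqrt ((x (Fin.last n) - y (Fin.last n)) ^ 2 +
        |x (Fin.last n) ^ 2 - y (Fin.last n) ^ 2|) < dist x y)
    (k : ℝ) (hk : k = (dist x' y' ^ 2 - x (Fin.last n) ^ 2 + y (Fin.last n) ^ 2) /
      (2 * dist x' y' ^ 2))
    (z : EuclideanSpace ℝ (Fin (n + 1))) (hz : z = x' + k • (y' - x')) :
    k ∈ Ioo (0 : ℝ) 1 ∧
    dist x z = dist y z ∧
    (∀ k' ∈ Ioo (0 : ℝ) 1,
      dist x (x' + k' • (y' - x')) = dist y (x' + k' • (y' - x')) → k' = k) ∧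
    dist x z = (dist x y / 2) *
      Real.sqrt ((dist x y ^ 2 + 4 * x (Fin.last n) * y (Fin.last n)) /
        (dist x y ^ 2 - (x (Fin.last n) - y (Fin.last n)) ^ 2)) ∧
    sInf ((fun w => max (dist x w) (dist y w)) '' upperHalfSpaceBdry n) = dist x z :=
  stmt_18_general x y x' y' hx' hy' h k hk z hz
end
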